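/- arXiv:1904.09960 — 11 statements merged into one kernel-verified Lean document; each statement's English description precedes it below -/
import Mathlib

section
/- Let 𝒞 = {C_1,…,C_m} be a set of node-disjoint chains whose vertex sets partition a finite set V, and let T be a time function for 𝒞. Then for every (𝒞,T)-constructed graph G, the set of sources of 𝒞 is a zero forcing set of G. -/
/-- The black vertex `u` forces the white vertex `v` (color-change rule), with respect to
edge set `E` and current black set `B`: `v` is the only white out-neighbor of `u` other
than `u` itself. -/
def Forces {V : Type*} [DecidableEq V] (E : Finset (V × V)) (B : Finset V) (u v : V) : Prop :=
  u ∈ B ∧ v ∉ B ∧ u ≠ v ∧ (u, v) ∈ E ∧ ∀ w, (u, w) ∈ E → w ≠ u → w ∉ B → w = v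

/-- Reachability between black sets by repeatedly applying the color-change rule. -/
inductive ZFReach {V : Type*} [DecidableEq V] (E : Finset (V × V)) : Finset V → Finset V → Prop
  | refl (B : Finset V) : ZFReach E B B
  | step {B C : Finset V} {u v : V} (h : Forces E B u v)
      (hr : ZFReach E (insert v B) C) : ZFReach E B C

/-- `Z` is a zero forcing set of the digraph on `V` with edge set `E`:
starting from the black set `Z`, repeated application of the color-change rule
turns all vertices black. -/
def IsZFS {V : Type*} [Fintype V] [DecidableEq V] (E : Finset (V × V)) (Z : Finset V) : Prop :=
  ZFReach E Z Finset.univ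

/-- A set of node-disjoint chains whose vertex sets partition `V`, encoded by the
(injective, acyclic) partial successor map along the chains. -/
structure ChainSystem (V : Type*) where
  next : V → Option V
  inj : ∀ u v w, next u = some w → next v = some w → u = v
  acyclic : ∀ v, ¬ Relation.TransGen (fun a b => next a = some b) v v

namespace ChainSystem

variable {V : Type*} [Fintype V] [DecidableEq V] (S : ChainSystem V)

/-- `v` is the source of one of the chains (no in-neighbor in the chains). -/
def IsSource (v : V) : Prop := ∀ u, S.next u ≠ some v

/-- The set of sources of the chains. -/
def sources : Finset V := Finset.univ.filter fun v => ∀ u, S.next u ≠ some v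

/-- The number `m` of chains (= number of sources). -/
def m : ℕ := S.sources.card

/-- `γ = n − m + 1`. -/
def γ : ℕ := Fintype.card V - S.m + 1

/-- The set of chain edges `⋃ᵢ E(Cᵢ)`. -/
def chainEdges : Finset (V × V) := Finset.univ.filter fun p => S.next p.1 = some p.2

/-- `T` is a time function for the set of chains: it takes values in `[1, γ]`, equals `1` on
sources, is injective on non-sources, and increases along chains. -/
def IsTimeFunction (T : V → ℕ) : Prop :=
  (∀ v, 1 ≤ T v ∧ T v ≤ S.γ) ∧
  (∀ v, S.IsSource v → T v = 1) ∧
  (∀ u v, ¬ S.IsSource u → ¬ S.IsSource v → u ≠ v → T u ≠ T v) ∧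
  (∀ u v, S.next u = some v → T u < T v)

/-- `T_max(v) = γ` if `v` is a sink, and `T(v+1) − 1` otherwise. -/
def Tmax (T : V → ℕ) (v : V) : ℕ := (S.next v).elim S.γ fun w => T w - 1

/-- The digraph with edge set `E` is a `(𝒞,T)`-constructed graph: it contains all chain
edges, and every non-chain edge `(u,v)` satisfies `T_max(u) ≥ T(v)`. -/
def IsConstructed (T : V → ℕ) (E : Finset (V × V)) : Prop :=
  S.chainEdges ⊆ E ∧ ∀ p ∈ E, p ∉ S.chainEdges → T p.2 ≤ S.Tmax T p.1

/-- The edge set of the perfect `(𝒞,T)`-constructed graph: all chain edges together with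
all pairs `(u,v)` with `T_max(u) ≥ T(v)`. -/
def perfEdges (T : V → ℕ) : Finset (V × V) :=
  S.chainEdges ∪ Finset.univ.filter fun p => T p.2 ≤ S.Tmax T p.1

end ChainSystem

/-- the set of sources of a set of node-disjoint chains `𝒞` (partitioning `V`)
is a zero forcing set of every `(𝒞,T)`-constructed graph. -/
theorem stmt0 {V : Type*} [Fintype V] [DecidableEq V] (S : ChainSystem V) (T : V → ℕ)
    (hT : S.IsTimeFunction T) (E : Finset (V × V)) (hE : S.IsConstructed T E) :
    IsZFS E S.sources := by
  classical
  obtain ⟨hrange, hsrc, hinj, hmono⟩ := hT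
  obtain ⟨hchain, hnon⟩ := hE
  have hns : ∀ v : V, ¬ S.IsSource v → 2 ≤ T v := by
    intro v hv
    simp only [ChainSystem.IsSource, not_forall, not_not] at hv
    obtain ⟨u, hu⟩ := hv
    have h1 := hmono u v hu
    have h2 := (hrange u).1
    omega
  have key : ∀ d t, 1 ≤ t → t + d = S.γ →
      ZFReach E (Finset.univ.filter fun v => T v ≤ t) Finset.univ := by
    intro d
    induction d with
    | zero =>
      intro t _ ht
      have heq : (Finset.univ.filter fun v => T v ≤ t) = Finset.univ := by
        ext v; simp only [Finset.mem_filter, Finset.mem_univ, true_and, iff_true]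
        have := (hrange v).2; omega
      rw [heq]; exact ZFReach.refl _
    | succ d ih =>
      intro t ht1 ht
      have hr := ih (t+1) (by omega) (by omega)
      by_cases hw : ∃ w : V, T w = t + 1
      · obtain ⟨w, hwT⟩ := hw
        have hwns : ¬ S.IsSource w := by
          intro h; have := hsrc w h; omega
        have hwpred : ∃ u, S.next u = some w := by
          by_contra h; push_neg at h; exact hwns h
        obtain ⟨u, hu⟩ := hwpred
        have huT : T u < t + 1 := hwT ▸ hmono u w hu
        have hforce : Forces E (Finset.univ.filter fun v => T v ≤ t) u w := by
          refine ⟨?_, ?_, ?_, ?_, ?_⟩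
          · simp only [Finset.mem_filter, Finset.mem_univ, true_and]; omega
          · simp only [Finset.mem_filter, Finset.mem_univ, true_and]; omega
          · intro h; rw [h] at huT; omega
          · refine hchain ?_
            simp only [ChainSystem.chainEdges, Finset.mem_filter, Finset.mem_univ, true_and]
            exact hu
          · intro x hx hxu hxB
            simp only [Finset.mem_filter, Finset.mem_univ, true_and, not_le] at hxB
            by_cases hc : (u, x) ∈ S.chainEdges
            · simp only [ChainSystem.chainEdges, Finset.mem_filter, Finset.mem_univ,
                true_and] at hc
              rw [hu] at hc
              exact (Option.some_inj.mp hc.symm)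
            · have hle := hnon (u, x) hx hc
              simp only [ChainSystem.Tmax, hu, Option.elim] at hle
              omega
        have heq : (Finset.univ.filter fun v => T v ≤ t + 1)
            = insert w (Finset.univ.filter fun v => T v ≤ t) := by
          ext v
          simp only [Finset.mem_insert, Finset.mem_filter, Finset.mem_univ, true_and]
          constructor
          · intro h
            rcases Nat.lt_or_ge (T v) (t + 1) with h' | h'
            · right; omega
            · left
              by_contra hne
              have hvs : ¬ S.IsSource v := by
                intro hs; have := hsrc v hs; omega
              exact hinj v w hvs hwns hne (by omega)
          · rintro (rfl | h)
            · omega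
            · omega
        exact ZFReach.step hforce (heq ▸ hr)
      · push_neg at hw
        have heq : (Finset.univ.filter fun v => T v ≤ t)
            = Finset.univ.filter fun v => T v ≤ t + 1 := by
          ext v
          simp only [Finset.mem_filter, Finset.mem_univ, true_and]
          have := hw v; omega
        rw [heq]; exact hr
  have hsources : S.sources = Finset.univ.filter fun v => T v ≤ 1 := by
    ext v
    simp only [ChainSystem.sources, Finset.mem_filter, Finset.mem_univ, true_and]
    constructor
    · intro h; exact le_of_eq (hsrc v h)
    · intro h
      by_contra hv
      have := hns v hv
      omega
  have hγ : 1 ≤ S.γ := by unfold ChainSystem.γ; omega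
  rw [IsZFS, hsources]
  exact key (S.γ - 1) 1 le_rfl (by omega)
end

section
/- Let G be a digraph on a finite vertex set V with |V| = n, and let Z be a zero forcing set of G with |Z| = m. Then there exist a set 𝒞 = {C_1,…,C_m} of node-disjoint chains whose vertex sets partition V and whose set of sources is exactly Z, and a time function T for 𝒞, such that G is a (𝒞,T)-constructed graph. -/
namespace Stmt1Aux

variable {V : Type*} [DecidableEq V]

def ForceList (E : Finset (V × V)) : Finset V → List (V × V) → Prop
  | _, [] => True
  | B, p :: L => Forces E B p.1 p.2 ∧ ForceList E (insert p.2 B) L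

theorem zfreach_ex {E : Finset (V × V)} {B C : Finset V} (h : ZFReach E B C) :
    ∃ L : List (V × V), ForceList E B L ∧ ∀ x ∈ C, x ∈ B ∨ x ∈ L.map Prod.snd := by
  induction h with
  | refl B => exact ⟨[], trivial, fun x hx => Or.inl hx⟩
  | @step B C u v hf hr ih =>
    obtain ⟨L, hL, hcov⟩ := ih
    refine ⟨(u, v) :: L, ⟨hf, hL⟩, fun x hx => ?_⟩
    rcases hcov x hx with hx' | hx'
    · rcases Finset.mem_insert.mp hx' with h | h
      · exact Or.inr (by simp [h])
      · exact Or.inl h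
    · exact Or.inr (by simp [hx'])

theorem snd_not_mem {E : Finset (V × V)} {L : List (V × V)} :
    ∀ {B : Finset V}, ForceList E B L → ∀ p ∈ L, p.2 ∉ B := by
  induction L with
  | nil => intro B _ p hp; simp at hp
  | cons q L ih =>
    intro B h p hp
    obtain ⟨hf, hL⟩ := h
    rcases List.mem_cons.mp hp with rfl | hp
    · exact hf.2.1
    · intro hB
      exact ih hL p hp (Finset.mem_insert_of_mem hB)

theorem snds_nodup {E : Finset (V × V)} {L : List (V × V)} :
    ∀ {B : Finset V}, ForceList E B L → (L.map Prod.snd).Nodup := by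
  induction L with
  | nil => simp
  | cons q L ih =>
    intro B h
    obtain ⟨hf, hL⟩ := h
    simp only [List.map_cons, List.nodup_cons]
    refine ⟨?_, ih hL⟩
    intro hmem
    obtain ⟨p, hp, hpq⟩ := List.mem_map.mp hmem
    exact snd_not_mem hL p hp (hpq ▸ Finset.mem_insert_self q.2 B)

theorem fst_not_mem {E : Finset (V × V)} {u v : V} {L : List (V × V)} :
    ∀ {B B' : Finset V}, Forces E B u v → insert v B ⊆ B' → ForceList E B' L →
      u ∉ L.map Prod.fst := by
  induction L with
  | nil => simp
  | cons q L ih =>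
    intro B B' hf hsub hFL
    obtain ⟨hq, hL⟩ := hFL
    rw [List.map_cons, List.mem_cons]
    rintro (rfl | hmem)
    · -- u = q.1
      have hq2B : q.2 ∉ B := fun h => hq.2.1 (hsub (Finset.mem_insert_of_mem h))
      have : q.2 = v := hf.2.2.2.2 q.2 hq.2.2.2.1 (Ne.symm hq.2.2.1) hq2B
      exact hq.2.1 (hsub (this ▸ Finset.mem_insert_self v B))
    · exact ih hf (fun x hx => Finset.mem_insert_of_mem (hsub hx)) hL hmem

theorem fsts_nodup {E : Finset (V × V)} {L : List (V × V)} :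
    ∀ {B : Finset V}, ForceList E B L → (L.map Prod.fst).Nodup := by
  induction L with
  | nil => simp
  | cons q L ih =>
    intro B h
    obtain ⟨hf, hL⟩ := h
    simp only [List.map_cons, List.nodup_cons]
    exact ⟨fst_not_mem hf (Finset.Subset.refl _) hL, ih hL⟩

theorem forces_at {E : Finset (V × V)} {L : List (V × V)} :
    ∀ {B : Finset V}, ForceList E B L → ∀ (k : ℕ) (hk : k < L.length),
      Forces E (B ∪ ((L.map Prod.snd).take k).toFinset) (L.get ⟨k, hk⟩).1 (L.get ⟨k, hk⟩).2 := by
  induction L with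
  | nil => intro B _ k hk; simp at hk
  | cons q L ih =>
    intro B h k hk
    obtain ⟨hf, hL⟩ := h
    cases k with
    | zero => simpa using hf
    | succ k =>
      have hmain := ih hL k (by simpa using hk)
      have hset : B ∪ ((List.map Prod.snd (q :: L)).take (k+1)).toFinset
          = insert q.2 B ∪ ((L.map Prod.snd).take k).toFinset := by
        ext x
        simp only [List.map_cons, List.take_succ_cons, List.toFinset_cons,
          Finset.mem_union, Finset.mem_insert]
        tauto
      rw [hset]
      simpa using hmain

theorem indexOf_lt_of_mem_take {α : Type*} [DecidableEq α] :
    ∀ (l : List α) (k : ℕ) (x : α), x ∈ l.take k → l.idxOf x < k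
  | [], k, x, h => by simp at h
  | a :: l, 0, x, h => by simp at h
  | a :: l, k+1, x, h => by
    rw [List.take_succ_cons] at h
    by_cases hax : x = a
    · subst hax; simp [List.idxOf_cons_self]
    · rcases List.mem_cons.mp h with rfl | h
      · exact absurd rfl hax
      · rw [List.idxOf_cons_ne _ (by simpa using Ne.symm hax)]
        have := indexOf_lt_of_mem_take l k x h
        omega

end Stmt1Aux

/-- for every digraph `G` with zero forcing set `Z` there are node-disjoint
chains partitioning `V` with set of sources exactly `Z`, and a time function `T`, such
that `G` is a `(𝒞,T)`-constructed graph. -/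
theorem stmt1 {V : Type*} [Fintype V] [DecidableEq V] (E : Finset (V × V)) (Z : Finset V)
    (hZ : IsZFS E Z) :
    ∃ (S : ChainSystem V) (T : V → ℕ),
      S.sources = Z ∧ S.IsTimeFunction T ∧ S.IsConstructed T E := by
  obtain ⟨L, hL, hcov0⟩ := Stmt1Aux.zfreach_ex hZ
  have hcov : ∀ x : V, x ∈ Z ∨ x ∈ L.map Prod.snd := fun x => hcov0 x (Finset.mem_univ x)
  set snds := L.map Prod.snd with hsnds
  have hnodupS : snds.Nodup := Stmt1Aux.snds_nodup hL
  have hnodupF : (L.map Prod.fst).Nodup := Stmt1Aux.fsts_nodup hL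
  have hZdisj : ∀ p ∈ L, p.2 ∉ Z := Stmt1Aux.snd_not_mem hL
  -- the successor map
  set next : V → Option V := fun u => (L.find? fun p => p.1 == u).map Prod.snd with hnextdef
  have hnext_iff : ∀ u v, next u = some v ↔ (u, v) ∈ L := by
    intro u v
    constructor
    · intro h
      simp only [hnextdef, Option.map_eq_some_iff] at h
      obtain ⟨q, hq, rfl⟩ := h
      have h1 : q.1 = u := by simpa using List.find?_some hq
      have h2 : q ∈ L := List.mem_of_find?_eq_some hq
      rw [← h1]
      simpa using h2
    · intro h
      rcases hfind : L.find? (fun p => p.1 == u) with _ | q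
      · exfalso
        have := List.find?_eq_none.mp hfind (u, v) h
        simp at this
      · have h1 : q.1 = u := by simpa using List.find?_some hfind
        have h2 : q ∈ L := List.mem_of_find?_eq_some hfind
        have hq : q = (u, v) := List.inj_on_of_nodup_map hnodupF h2 h (by simp [h1])
        simp [hnextdef, hfind, hq]
  -- the time function
  set T : V → ℕ := fun v => if v ∈ Z then 1 else 2 + snds.idxOf v with hTdef
  have hsndZ : ∀ v ∈ snds, v ∉ Z := by
    intro v hv
    obtain ⟨p, hp, rfl⟩ := List.mem_map.mp hv
    exact hZdisj p hp
  have hidx : ∀ (j : ℕ) (hj : j < snds.length), snds.idxOf (snds.get ⟨j, hj⟩) = j := by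
    intro j hj
    have h1 : snds.idxOf (snds.get ⟨j, hj⟩) < snds.length :=
      List.idxOf_lt_length_iff.mpr (List.get_mem _ _)
    have h2 : snds.get ⟨_, h1⟩ = snds.get ⟨j, hj⟩ := List.idxOf_get h1
    have h3 := List.nodup_iff_injective_get.mp hnodupS h2
    exact congrArg Fin.val h3
  have hTle : ∀ (k : ℕ) (x : V), x ∈ Z ∪ (snds.take k).toFinset → T x ≤ k + 1 := by
    intro k x hx
    rcases Finset.mem_union.mp hx with hx | hx
    · simp only [hTdef, if_pos hx]; omega
    · have hx' := List.mem_toFinset.mp hx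
      have hxs : x ∈ snds := List.mem_of_mem_take hx'
      have hlt : snds.idxOf x < k := Stmt1Aux.indexOf_lt_of_mem_take snds k x hx'
      simp only [hTdef, if_neg (hsndZ x hxs)]
      omega
  have hTget : ∀ (k : ℕ) (hk : k < L.length), T (L.get ⟨k, hk⟩).2 = k + 2 := by
    intro k hk
    have hk' : k < snds.length := by simpa [hsnds] using hk
    have hget : snds.get ⟨k, hk'⟩ = (L.get ⟨k, hk⟩).2 := by simp [hsnds]
    have hmem : (L.get ⟨k, hk⟩).2 ∈ snds := hget ▸ List.get_mem _ _
    have hidxk : snds.idxOf (L.get ⟨k, hk⟩).2 = k := by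
      rw [← hget]; exact hidx k hk'
    simp only [hTdef, if_neg (hsndZ _ hmem), hidxk]
    omega
  have hmono : ∀ u v, next u = some v → T u < T v := by
    intro u v h
    have hmem : (u, v) ∈ L := (hnext_iff u v).mp h
    obtain ⟨⟨k, hk⟩, hget⟩ := List.get_of_mem hmem
    have hf := Stmt1Aux.forces_at hL k hk
    rw [hget] at hf
    have h1 : T u ≤ k + 1 := hTle k u hf.1
    have h2 : T v = k + 2 := by
      have := hTget k hk
      rwa [hget] at this
    omega
  have hacyc : ∀ v, ¬ Relation.TransGen (fun a b => next a = some b) v v := by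
    intro v hv
    have key : ∀ a b, Relation.TransGen (fun a b => next a = some b) a b → T a < T b := by
      intro a b h
      induction h with
      | single h => exact hmono _ _ h
      | tail _ h ih => exact lt_trans ih (hmono _ _ h)
    exact absurd (key v v hv) (lt_irrefl _)
  have hinj : ∀ u v w, next u = some w → next v = some w → u = v := by
    intro u v w hu hv
    have h1 := (hnext_iff u w).mp hu
    have h2 := (hnext_iff v w).mp hv
    have h3 : ((u, w) : V × V) = (v, w) := List.inj_on_of_nodup_map hnodupS h1 h2 rfl
    exact congrArg Prod.fst h3
  set S : ChainSystem V := ⟨next, hinj, hacyc⟩ with hSdef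
  have hsource_iff : ∀ v, (∀ u, next u ≠ some v) ↔ v ∈ Z := by
    intro v
    constructor
    · intro h
      by_contra hv
      rcases hcov v with hv' | hv'
      · exact hv hv'
      obtain ⟨p, hp, hpv⟩ := List.mem_map.mp hv'
      refine h p.1 ((hnext_iff p.1 v).mpr ?_)
      rw [← hpv]
      simpa using hp
    · intro hv u hu
      exact hZdisj (u, v) ((hnext_iff u v).mp hu) hv
  have hsources : S.sources = Z := by
    ext v
    simp only [ChainSystem.sources, Finset.mem_filter, Finset.mem_univ, true_and]
    exact hsource_iff v
  have huniv : Fintype.card V = Z.card + L.length := by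
    have huZ : (Finset.univ : Finset V) = Z ∪ snds.toFinset := by
      ext x
      simp only [Finset.mem_univ, true_iff, Finset.mem_union, List.mem_toFinset]
      exact hcov x
    have hdisj : Disjoint Z snds.toFinset := by
      rw [Finset.disjoint_left]
      intro a ha ha'
      exact hsndZ a (List.mem_toFinset.mp ha') ha
    calc Fintype.card V = (Z ∪ snds.toFinset).card := by rw [← huZ]; rfl
      _ = Z.card + snds.toFinset.card := Finset.card_union_of_disjoint hdisj
      _ = Z.card + L.length := by
          rw [List.toFinset_card_of_nodup hnodupS]; simp [hsnds]
  have hγ : S.γ = L.length + 1 := by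
    simp only [ChainSystem.γ, ChainSystem.m, hsources, huniv]
    omega
  have hTbound : ∀ v, 1 ≤ T v ∧ T v ≤ S.γ := by
    intro v
    rw [hγ]
    rcases hcov v with hv | hv
    · simp only [hTdef, if_pos hv]; omega
    · have hlt : snds.idxOf v < snds.length := List.idxOf_lt_length_iff.mpr hv
      have hlen : snds.length = L.length := by simp [hsnds]
      simp only [hTdef, if_neg (hsndZ v hv)]
      omega
  refine ⟨S, T, hsources, ⟨hTbound, ?_, ?_, hmono⟩, ?_, ?_⟩
  · intro v hv
    have hvZ : v ∈ Z := (hsource_iff v).mp hv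
    simp [hTdef, hvZ]
  · intro u v hu hv huv hTuv
    have huZ : u ∉ Z := fun h => hu ((hsource_iff u).mpr h)
    have hvZ : v ∉ Z := fun h => hv ((hsource_iff v).mpr h)
    have hus : u ∈ snds := (hcov u).resolve_left huZ
    have hvs : v ∈ snds := (hcov v).resolve_left hvZ
    simp only [hTdef, if_neg huZ, if_neg hvZ] at hTuv
    have hidxeq : snds.idxOf u = snds.idxOf v := by omega
    have h1 : snds.idxOf u < snds.length := List.idxOf_lt_length_iff.mpr hus
    have h2 : snds.idxOf v < snds.length := List.idxOf_lt_length_iff.mpr hvs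
    have hu' := List.idxOf_get h1
    have hv' := List.idxOf_get h2
    refine huv ?_
    rw [← hu', ← hv']
    exact congrArg snds.get (Fin.ext hidxeq)
  · -- chainEdges ⊆ E
    intro p hp
    have hnp : next p.1 = some p.2 := by
      simpa [ChainSystem.chainEdges] using hp
    have hmem : (p.1, p.2) ∈ L := (hnext_iff _ _).mp hnp
    obtain ⟨⟨k, hk⟩, hget⟩ := List.get_of_mem hmem
    have hf := Stmt1Aux.forces_at hL k hk
    rw [hget] at hf
    exact hf.2.2.2.1
  · -- non-chain edges
    intro p hpE hpc
    have hnc : ¬ next p.1 = some p.2 := by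
      simpa [ChainSystem.chainEdges] using hpc
    rcases hn : next p.1 with _ | w
    · have : S.Tmax T p.1 = S.γ := by
        simp [ChainSystem.Tmax, hSdef, hn]
      rw [this]
      exact (hTbound p.2).2
    · have hmem : (p.1, w) ∈ L := (hnext_iff _ _).mp hn
      obtain ⟨⟨k, hk⟩, hget⟩ := List.get_of_mem hmem
      have hf := Stmt1Aux.forces_at hL k hk
      rw [hget] at hf
      have hTw : T w = k + 2 := by
        have := hTget k hk
        rwa [hget] at this
      have hTmax : S.Tmax T p.1 = k + 1 := by
        simp [ChainSystem.Tmax, hSdef, hn, hTw]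
      rw [hTmax]
      have hpw : p.2 ≠ w := fun h => hnc (h ▸ hn)
      by_cases hpa : p.2 = p.1
      · rw [hpa]
        exact hTle k p.1 hf.1
      · by_cases hB : p.2 ∈ Z ∪ (snds.take k).toFinset
        · exact hTle k p.2 hB
        · exact absurd (hf.2.2.2.2 p.2 hpE hpa hB) hpw
end

section
/- Let 𝒞 be a set of node-disjoint chains whose vertex sets partition {1,…,n}, with set of sources S, and let T be a time function for 𝒞. For a subset V_C ⊆ {1,…,n}, let B(V_C) be the n × |V_C| matrix whose columns are the standard basis vectors e_j for j ∈ V_C. Then the pair (A, B(V_C)) is controllable for every matrix A ∈ P(𝒢^{𝒞,T}) if and only if S ⊆ V_C. -/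
/-- The qualitative class of a digraph on `Fin n`: off-diagonal `A i j ≠ 0` iff `(j,i)` is
an edge. -/
def Qual {n : ℕ} (E : Finset (Fin n × Fin n)) (A : Matrix (Fin n) (Fin n) ℝ) : Prop :=
  ∀ i j : Fin n, i ≠ j → (A i j ≠ 0 ↔ (j, i) ∈ E)

/-- The `n × |V_C|` input matrix whose columns are the standard basis vectors `e_j`,
`j ∈ V_C`. -/
def Bmat {n : ℕ} (VC : Finset (Fin n)) : Matrix (Fin n) {j // j ∈ VC} ℝ :=
  fun i j => if i = (j : Fin n) then 1 else 0

/-- The controllability matrix `[B, AB, …, A^{n−1}B]`. -/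
def ctrbMatrix {n : ℕ} {κ : Type*} [Fintype κ] (A : Matrix (Fin n) (Fin n) ℝ)
    (B : Matrix (Fin n) κ ℝ) : Matrix (Fin n) (Fin n × κ) ℝ :=
  fun i p => (A ^ (p.1 : ℕ) * B) i p.2

/-- The pair `(A,B)` is controllable: the controllability matrix has rank `n`. -/
def Controllable {n : ℕ} {κ : Type*} [Fintype κ] (A : Matrix (Fin n) (Fin n) ℝ)
    (B : Matrix (Fin n) κ ℝ) : Prop :=
  (ctrbMatrix A B).rank = n


open Matrix in
lemma rank_eq_card_of_forall_ker {n : ℕ} {κ : Type*} [Fintype κ] (M : Matrix (Fin n) κ ℝ)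
    (h : ∀ z : Fin n → ℝ, (∀ p, ∑ i, M i p * z i = 0) → z = 0) : M.rank = n := by
  rw [← Matrix.rank_transpose]
  have hker : LinearMap.ker (Mᵀ.mulVecLin) = ⊥ := by
    rw [LinearMap.ker_eq_bot']
    intro z hz
    apply h
    intro p
    have := congrFun hz p
    simpa [Matrix.mulVecLin_apply, Matrix.mulVec, Matrix.vecMul, dotProduct,
      mul_comm] using this
  have h2 := LinearMap.finrank_range_add_finrank_ker (Mᵀ.mulVecLin)
  rw [hker, finrank_bot] at h2
  rw [Matrix.rank]
  simpa using h2

open Matrix in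
lemma rank_ne_card_of_ker_vec {n : ℕ} {κ : Type*} [Fintype κ] (M : Matrix (Fin n) κ ℝ)
    (z : Fin n → ℝ) (hz : z ≠ 0) (h : ∀ p, ∑ i, M i p * z i = 0) : M.rank ≠ n := by
  rw [← Matrix.rank_transpose, Matrix.rank]
  have h2 := LinearMap.finrank_range_add_finrank_ker (Mᵀ.mulVecLin)
  have hker : z ∈ LinearMap.ker (Mᵀ.mulVecLin) := by
    ext p
    simpa [Matrix.mulVecLin_apply, Matrix.mulVec, Matrix.vecMul, dotProduct,
      mul_comm] using h p
  have hpos : 0 < Module.finrank ℝ (LinearMap.ker (Mᵀ.mulVecLin)) := by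
    rw [Module.finrank_pos_iff_exists_ne_zero]
    exact ⟨⟨z, hker⟩, by simpa using hz⟩
  simp only [Module.finrank_pi, Fintype.card_fin] at h2
  omega

lemma zfs_controllable {n : ℕ} (E : Finset (Fin n × Fin n)) (VC : Finset (Fin n))
    (hZ : IsZFS E VC) (A : Matrix (Fin n) (Fin n) ℝ) (hA : Qual E A) :
    Controllable A (Bmat VC) := by
  apply rank_eq_card_of_forall_ker
  intro z hz
  set φ : ℕ → Fin n → ℝ := fun k v => ∑ i, (A ^ k) i v * z i with hφ
  have hcol : ∀ (k : ℕ) (j : Fin n), k < n → j ∈ VC → φ k j = 0 := by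
    intro k j hk hj
    have h := hz (⟨k, hk⟩, ⟨j, hj⟩)
    simp only [ctrbMatrix, Bmat, Matrix.mul_apply] at h
    rw [← h]
    apply Finset.sum_congr rfl
    intro i _
    congr 1
    simp [Finset.sum_ite_eq]
  have hrec : ∀ (k : ℕ) (u : Fin n), φ (k + 1) u = ∑ w, A w u * φ k w := by
    intro k u
    simp only [hφ, pow_succ, Matrix.mul_apply, Finset.sum_mul, Finset.mul_sum]
    rw [Finset.sum_comm]
    apply Finset.sum_congr rfl; intro w _
    apply Finset.sum_congr rfl; intro i _
    ring
  have main : ∀ (B C : Finset (Fin n)), ZFReach E B C →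
      (∀ v ∈ B, ∀ k, k + B.card ≤ n → φ k v = 0) →
      (∀ v ∈ C, ∀ k, k + C.card ≤ n → φ k v = 0) := by
    intro B C h
    induction h with
    | refl B => exact fun h => h
    | @step B C u v hf hr ih =>
      intro hB
      apply ih
      intro w hw k hk
      rw [Finset.card_insert_of_notMem hf.2.1] at hk
      rcases Finset.mem_insert.mp hw with rfl | hwB
      · obtain ⟨huB, hvB, huv, huvE, huniq⟩ := hf
        have h0 : φ (k + 1) u = 0 := hB u huB (k + 1) (by omega)
        rw [hrec] at h0
        rw [Finset.sum_eq_single w] at h0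
        · have hAvu : A w u ≠ 0 := by
            rw [hA w u (Ne.symm huv)]; exact huvE
          exact (mul_eq_zero.mp h0).resolve_left hAvu
        · intro w' _ hw'
          by_cases hA0 : A w' u = 0
          · rw [hA0, zero_mul]
          · by_cases hwu : w' = u
            · subst hwu
              rw [hB w' huB k (by omega), mul_zero]
            · have hE : (u, w') ∈ E := (hA w' u hwu).mp hA0
              by_cases hw'B : w' ∈ B
              · rw [hB w' hw'B k (by omega), mul_zero]
              · exact absurd (huniq w' hE hwu hw'B) hw'
        · intro h; exact absurd (Finset.mem_univ w) h
      · exact hB w hwB k (by omega)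
  have hall : ∀ v : Fin n, φ 0 v = 0 := by
    intro v
    refine main VC Finset.univ hZ ?_ v (Finset.mem_univ v) 0 (by simp)
    intro v' hv' k hk
    refine hcol k v' ?_ hv'
    have : 0 < VC.card := Finset.card_pos.mpr ⟨v', hv'⟩
    omega
  funext v
  have := hall v
  simpa [hφ, Finset.sum_ite_eq, Matrix.one_apply] using this

lemma constructed_zfs {V : Type*} [Fintype V] [DecidableEq V] (S : ChainSystem V)
    (T : V → ℕ) (hT : S.IsTimeFunction T) (E : Finset (V × V))
    (hE : S.IsConstructed T E) (VC : Finset V) (hS : S.sources ⊆ VC) : IsZFS E VC := by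
  classical
  obtain ⟨hbd, hsrc1, hinjT, hmono⟩ := hT
  have hsrcmem : ∀ v : V, S.IsSource v → v ∈ S.sources := by
    intro v hv
    simp only [ChainSystem.sources, Finset.mem_filter, Finset.mem_univ, true_and]
    exact hv
  have aux : ∀ (d t : ℕ), S.γ + 1 ≤ t + d → ∀ B : Finset V, S.sources ⊆ B →
      (∀ w, ¬ S.IsSource w → T w < t → w ∈ B) → ZFReach E B Finset.univ := by
    intro d
    induction d with
    | zero =>
      intro t ht B hsB hinv
      have : B = Finset.univ := by
        apply Finset.eq_univ_of_forall
        intro v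
        by_cases hv : S.IsSource v
        · exact hsB (hsrcmem v hv)
        · exact hinv v hv (by have := (hbd v).2; omega)
      rw [this]; exact ZFReach.refl _
    | succ d ih =>
      intro t ht B hsB hinv
      by_cases hex : ∃ v, ¬ S.IsSource v ∧ T v = t ∧ v ∉ B
      · obtain ⟨v, hvns, hvt, hvB⟩ := hex
        have hu : ∃ u, S.next u = some v := by
          simp only [ChainSystem.IsSource] at hvns; push_neg at hvns; exact hvns
        obtain ⟨u, hnext⟩ := hu
        have huv : u ≠ v := by
          rintro rfl
          exact S.acyclic u (Relation.TransGen.single hnext)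
        have huB : u ∈ B := by
          by_cases hus : S.IsSource u
          · exact hsB (hsrcmem u hus)
          · exact hinv u hus (by have := hmono u v hnext; omega)
        have hchain : (u, v) ∈ S.chainEdges := by
          simp only [ChainSystem.chainEdges, Finset.mem_filter, Finset.mem_univ, true_and]
          exact hnext
        have hforce : Forces E B u v := by
          refine ⟨huB, hvB, huv, hE.1 hchain, ?_⟩
          intro w hwE hwu hwB
          by_cases hwc : (u, w) ∈ S.chainEdges
          · simp only [ChainSystem.chainEdges, Finset.mem_filter, Finset.mem_univ,
              true_and] at hwc
            rw [hnext] at hwc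
            exact (Option.some_injective _ hwc.symm)
          · have hle := hE.2 (u, w) hwE hwc
            simp only [ChainSystem.Tmax, hnext, Option.elim] at hle
            have hwt : T w < t := by have := (hbd v).1; omega
            exfalso
            by_cases hws : S.IsSource w
            · exact hwB (hsB (hsrcmem w hws))
            · exact hwB (hinv w hws hwt)
        refine ZFReach.step hforce ?_
        apply ih (t + 1) (by omega)
        · exact hsB.trans (Finset.subset_insert _ _)
        · intro w hwns hwt
          rcases Nat.lt_succ_iff_lt_or_eq.mp hwt with h | h
          · exact Finset.mem_insert_of_mem (hinv w hwns h)
          · have : w = v := by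
              by_contra hne
              exact hinjT w v hwns hvns hne (by omega)
            rw [this]; exact Finset.mem_insert_self _ _
      · apply ih (t + 1) (by omega) B hsB
        intro w hwns hwt
        rcases Nat.lt_succ_iff_lt_or_eq.mp hwt with h | h
        · exact hinv w hwns h
        · push_neg at hex
          exact hex w hwns h
  exact aux (S.γ + 1) 0 (by omega) VC hS (by intro w _ h; omega)

lemma source_needed {n : ℕ} (S : ChainSystem (Fin n)) (T : Fin n → ℕ)
    (VC : Finset (Fin n)) (s : Fin n) (hs : s ∈ S.sources) (hsVC : s ∉ VC) :
    ∃ A : Matrix (Fin n) (Fin n) ℝ,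
      (∃ E : Finset (Fin n × Fin n), S.IsConstructed T E ∧ Qual E A) ∧
      ¬ Controllable A (Bmat VC) := by
  classical
  set A : Matrix (Fin n) (Fin n) ℝ := fun i j => if S.next j = some i then 1 else 0 with hAdef
  have hsrc : S.IsSource s := by
    simpa [ChainSystem.sources, ChainSystem.IsSource] using hs
  refine ⟨A, ⟨S.chainEdges, ⟨subset_rfl, fun p hp hnp => absurd hp hnp⟩, ?_⟩, ?_⟩
  · intro i j hij
    simp only [hAdef, ChainSystem.chainEdges, Finset.mem_filter, Finset.mem_univ, true_and]
    by_cases h : S.next j = some i <;> simp [h]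
  · have hrow : ∀ j, A s j = 0 := by
      intro j
      simp only [hAdef]
      rw [if_neg (hsrc j)]
    have hpow : ∀ (k : ℕ) (l : Fin n), (A ^ (k + 1)) s l = 0 := by
      intro k
      induction k with
      | zero => intro l; rw [pow_one]; exact hrow l
      | succ k ih =>
        intro l
        rw [pow_succ, Matrix.mul_apply]
        exact Finset.sum_eq_zero fun w _ => by rw [ih w, zero_mul]
    intro hc
    refine rank_ne_card_of_ker_vec _ (Pi.single s 1) ?_ ?_ hc
    · intro h0
      have := congrFun h0 s
      simp at this
    · rintro ⟨k, j⟩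
      have hcollapse : ∑ i, ctrbMatrix A (Bmat VC) i (k, j) * (Pi.single s 1 : Fin n → ℝ) i
          = ctrbMatrix A (Bmat VC) s (k, j) := by
        rw [Finset.sum_eq_single s]
        · simp
        · intro i _ hi; simp [Pi.single_apply, hi]
        · intro h; exact absurd (Finset.mem_univ s) h
      rw [hcollapse]
      simp only [ctrbMatrix, Matrix.mul_apply, Bmat]
      rcases Nat.eq_zero_or_pos (k : ℕ) with hk | hk
      · rw [hk, pow_zero]
        apply Finset.sum_eq_zero
        intro l _
        rcases eq_or_ne l (j : Fin n) with rfl | hl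
        · rw [Matrix.one_apply_ne, zero_mul]
          rintro rfl
          exact hsVC j.2
        · rw [if_neg hl, mul_zero]
      · apply Finset.sum_eq_zero
        intro l _
        obtain ⟨k', hk'⟩ := Nat.exists_eq_add_of_lt hk
        rw [show ((k : ℕ)) = k' + 1 by omega, hpow k' l, zero_mul]

/-- `(A, B(V_C))` is controllable for every `A ∈ P(𝒢^{𝒞,T})` iff `V_C`
contains the sources of `𝒞`. -/
theorem stmt2 {n : ℕ} (S : ChainSystem (Fin n)) (T : Fin n → ℕ) (hT : S.IsTimeFunction T)
    (VC : Finset (Fin n)) :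
    (∀ A : Matrix (Fin n) (Fin n) ℝ,
        (∃ E : Finset (Fin n × Fin n), S.IsConstructed T E ∧ Qual E A) →
        Controllable A (Bmat VC)) ↔ S.sources ⊆ VC := by
  constructor
  · intro h s hs
    by_contra hsVC
    obtain ⟨A, hA, hnc⟩ := source_needed S T VC s hs hsVC
    exact hnc (h A hA)
  · rintro hS A ⟨E, hE, hq⟩
    exact zfs_controllable E VC (constructed_zfs S T hT E hE VC hS) A hq
end

section
/- Let 𝒞 be a set of node-disjoint chains whose vertex sets partition a finite set V, with set of sources S, and let T be a time function for 𝒞. Then a subset V_C ⊆ V is a zero forcing set of every (𝒞,T)-constructed graph G if and only if S ⊆ V_C. -/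
theorem zfreach_trans {V : Type*} [DecidableEq V] {E : Finset (V × V)} {A B C : Finset V}
    (h1 : ZFReach E A B) (h2 : ZFReach E B C) : ZFReach E A C := by
  induction h1 with
  | refl => exact h2
  | step h _ ih => exact ZFReach.step h (ih h2)

theorem zfreach_mem {V : Type*} [DecidableEq V] {E : Finset (V × V)} {B C : Finset V}
    (h : ZFReach E B C) : ∀ v ∈ C, v ∈ B ∨ ∃ u, (u, v) ∈ E := by
  induction h with
  | refl => exact fun v hv => Or.inl hv
  | step hf _ ih =>
    intro v hv
    rcases ih v hv with h' | h'
    · rcases Finset.mem_insert.mp h' with rfl | h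
      · exact Or.inr ⟨_, hf.2.2.2.1⟩
      · exact Or.inl h
    · exact Or.inr h'

theorem stmt3' {V : Type*} [Fintype V] [DecidableEq V] (S : ChainSystem V) (T : V → ℕ)
    (hT : S.IsTimeFunction T) (VC : Finset V) :
    (∀ E : Finset (V × V), S.IsConstructed T E → IsZFS E VC) ↔ S.sources ⊆ VC := by
  obtain ⟨hrange, hsrc1, hinj, hmono⟩ := hT
  constructor
  · intro h s hs
    have hzfs := h S.chainEdges ⟨le_refl _, fun p hp hnp => absurd hp hnp⟩
    have hsrc : S.IsSource s := (Finset.mem_filter.mp hs).2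
    rcases zfreach_mem hzfs s (Finset.mem_univ s) with h' | ⟨u, hu⟩
    · exact h'
    · exact absurd (Finset.mem_filter.mp hu).2 (hsrc u)
  · intro hSVC E hE
    -- non-sources have T ≥ 2
    have hns2 : ∀ v, ¬ S.IsSource v → 2 ≤ T v := by
      intro v hv
      simp only [ChainSystem.IsSource, not_forall, not_not] at hv
      obtain ⟨u, hu⟩ := hv
      have := hmono u v hu
      have := (hrange u).1
      omega
    set B : ℕ → Finset V := fun t => VC ∪ Finset.univ.filter (fun v => T v ≤ t) with hB
    have key : ∀ t, ZFReach E VC (B t) := by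
      intro t
      induction t with
      | zero =>
        have : B 0 = VC := by
          ext v
          simp only [hB, Finset.mem_union, Finset.mem_filter, Finset.mem_univ, true_and]
          have := (hrange v).1
          constructor
          · rintro (h | h)
            · exact h
            · omega
          · exact Or.inl
        rw [this]; exact ZFReach.refl _
      | succ t ih =>
        by_cases heq : B (t + 1) = B t
        · rw [heq]; exact ih
        · -- there is a vertex in B (t+1) \ B t
          have hsub : B t ⊆ B (t + 1) := by
            intro w hw
            simp only [hB, Finset.mem_union, Finset.mem_filter, Finset.mem_univ, true_and] at hw ⊢
            rcases hw with h | h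
            · exact Or.inl h
            · exact Or.inr (by omega)
          obtain ⟨v, hv1, hv0⟩ : ∃ v, v ∈ B (t + 1) ∧ v ∉ B t := by
            by_contra hc
            push_neg at hc
            exact heq (Finset.Subset.antisymm hc hsub)
          have hvVC : v ∉ VC := fun h => hv0 (Finset.mem_union_left _ h)
          have hvT : T v = t + 1 := by
            simp only [hB, Finset.mem_union, Finset.mem_filter, Finset.mem_univ, true_and] at hv1 hv0
            push_neg at hv0
            rcases hv1 with h | h
            · exact absurd h hvVC
            · have := hv0.2; omega
          have hvns : ¬ S.IsSource v := by
            intro h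
            exact hvVC (hSVC (Finset.mem_filter.mpr ⟨Finset.mem_univ v, h⟩))
          -- predecessor u
          have : ∃ u, S.next u = some v := by
            simp only [ChainSystem.IsSource, not_forall, not_not] at hvns
            exact hvns
          obtain ⟨u, hu⟩ := this
          have huT : T u < T v := hmono u v hu
          have huB : u ∈ B t := by
            simp only [hB, Finset.mem_union, Finset.mem_filter, Finset.mem_univ, true_and]
            exact Or.inr (by omega)
          have hchain : (u, v) ∈ S.chainEdges :=
            Finset.mem_filter.mpr ⟨Finset.mem_univ _, hu⟩
          have huv : u ≠ v := fun h => by subst h; omega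
          have hforce : Forces E (B t) u v := by
            refine ⟨huB, hv0, huv, hE.1 hchain, ?_⟩
            intro w hw hwu hwB
            by_cases hwc : (u, w) ∈ S.chainEdges
            · have := (Finset.mem_filter.mp hwc).2
              rw [hu] at this
              exact (Option.some_inj.mp this).symm
            · have hle := hE.2 (u, w) hw hwc
              simp only [ChainSystem.Tmax, hu, Option.elim] at hle
              exfalso
              apply hwB
              simp only [hB, Finset.mem_union, Finset.mem_filter, Finset.mem_univ, true_and]
              exact Or.inr (by omega)
          have hins : B (t + 1) = insert v (B t) := by
            ext w
            simp only [Finset.mem_insert]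
            constructor
            · intro hw
              by_cases hwB : w ∈ B t
              · exact Or.inr hwB
              · left
                have hwVC : w ∉ VC := fun h => hwB (Finset.mem_union_left _ h)
                have hwT : T w = t + 1 := by
                  simp only [hB, Finset.mem_union, Finset.mem_filter, Finset.mem_univ,
                    true_and] at hw hwB
                  push_neg at hwB
                  rcases hw with h | h
                  · exact absurd h hwVC
                  · have := hwB.2; omega
                have hwns : ¬ S.IsSource w := fun h =>
                  hwVC (hSVC (Finset.mem_filter.mpr ⟨Finset.mem_univ w, h⟩))
                by_contra hne
                exact hinj w v hwns hvns hne (by omega)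
            · rintro (rfl | hw)
              · exact hv1
              · exact hsub hw
          rw [hins] at *
          exact zfreach_trans ih (ZFReach.step hforce (ZFReach.refl _))
    have huniv : B S.γ = Finset.univ := by
      ext v
      simp only [hB, Finset.mem_union, Finset.mem_filter, Finset.mem_univ, true_and, iff_true]
      exact Or.inr (hrange v).2
    have := key S.γ
    rwa [huniv] at this

/-- `V_C` is a zero forcing set of every `(𝒞,T)`-constructed graph iff it
contains the set of sources of `𝒞`. -/
theorem stmt3 {V : Type*} [Fintype V] [DecidableEq V] (S : ChainSystem V) (T : V → ℕ)
    (hT : S.IsTimeFunction T) (VC : Finset V) :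
    (∀ E : Finset (V × V), S.IsConstructed T E → IsZFS E VC) ↔ S.sources ⊆ VC := stmt3' S T hT VC
end

section
/- Let G be a digraph on a finite vertex set V and let Z be a zero forcing set of G. Let (u,v) ∈ V × V with (u,v) ∉ E(G), and set G′ = G + {(u,v)} (the digraph obtained by adding the edge (u,v)). If Z is also a zero forcing set of G′, then there exist a set of node-disjoint chains 𝒞 whose vertex sets partition V and whose set of sources is Z, and a time function T for 𝒞, such that both G and G′ are (𝒞,T)-constructed graphs. -/
namespace Stmt5

variable {V : Type*} [Fintype V] [DecidableEq V]

def ValidSeq (E : Finset (V × V)) : Finset V → List (V × V) → Prop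
  | B, [] => B = Finset.univ
  | B, p :: L => Forces E B p.1 p.2 ∧ ValidSeq E (insert p.2 B) L

def GoodSeq (u v : V) : Finset V → List (V × V) → Prop
  | _, [] => True
  | B, p :: L => (p.1 = u → v ∈ B) ∧ GoodSeq u v (insert p.2 B) L

theorem zf_subset {E : Finset (V × V)} {B C : Finset V}
    (h : ZFReach E B C) : B ⊆ C := by
  induction h with
  | refl B => exact subset_rfl
  | step hf hr ih => exact (Finset.subset_insert _ _).trans ih

theorem zf_mono' {E : Finset (V × V)} {B C : Finset V}
    (h : ZFReach E B C) : ∀ B', B ⊆ B' → B' ⊆ C → ZFReach E B' C := by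
  induction h with
  | refl B =>
      intro B' h1 h2
      have : B' = B := subset_antisymm h2 h1
      rw [this]; exact ZFReach.refl _
  | @step B C a w hf hr ih =>
      intro B' h1 h2
      by_cases hw : w ∈ B'
      · exact ih B' (Finset.insert_subset hw h1) h2
      · refine ZFReach.step (u := a) (v := w) ?_
          (ih (insert w B') (Finset.insert_subset_insert _ h1)
            (Finset.insert_subset (zf_subset hr (Finset.mem_insert_self _ _)) h2))
        exact ⟨h1 hf.1, hw, hf.2.2.1, hf.2.2.2.1,
          fun x hx hxa hxB' => hf.2.2.2.2 x hx hxa (fun hxB => hxB' (h1 hxB))⟩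

theorem zf_mono {E : Finset (V × V)} {B B' : Finset V}
    (h : ZFReach E B Finset.univ) (hsub : B ⊆ B') : ZFReach E B' Finset.univ :=
  zf_mono' h B' hsub (Finset.subset_univ _)

theorem exists_force {E : Finset (V × V)} {B : Finset V}
    (h : ZFReach E B Finset.univ) (hne : B ≠ Finset.univ) :
    ∃ a w, Forces E B a w := by
  cases h with
  | refl => exact absurd rfl hne
  | step hf _ => exact ⟨_, _, hf⟩

/-- Existence of a good forcing sequence. -/
theorem exists_goodseq {E : Finset (V × V)} {Z : Finset V} {u v : V}
    (hZ : ZFReach E Z Finset.univ) (huv : (u, v) ∉ E)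
    (hZ' : ZFReach (insert (u, v) E) Z Finset.univ) :
    ∀ (k : ℕ) (B : Finset V), Z ⊆ B → Fintype.card V - B.card ≤ k →
      ∃ L, ValidSeq E B L ∧ GoodSeq u v B L := by
  intro k
  induction k with
  | zero =>
      intro B hZB hcard
      have : B = Finset.univ := by
        apply Finset.eq_univ_of_card
        have h1 : B.card ≤ Fintype.card V := B.card_le_univ
        omega
      exact ⟨[], this, trivial⟩
  | succ k ih =>
      intro B hZB hcard
      by_cases hB : B = Finset.univ
      · exact ⟨[], hB, trivial⟩
      · -- there is a force in E from B
        obtain ⟨a, w, hf⟩ := exists_force (zf_mono hZ hZB) hB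
        -- choose a good force
        have hgood : ∃ a w, Forces E B a w ∧ (a = u → v ∈ B) := by
          by_cases hvB : v ∈ B
          · exact ⟨a, w, hf, fun _ => hvB⟩
          · -- find a force not by u
            by_cases hall : ∀ a' w', Forces E B a' w' → a' = u
            · exfalso
              -- then no force in E' from B, contradicting hZ'
              obtain ⟨a', w', hf'⟩ := exists_force (zf_mono hZ' hZB) hB
              by_cases hau : a' = u
              · subst hau
                have hvu : v ≠ a' := fun h => hvB (h ▸ hf'.1)
                have hvw' : v = w' :=
                  hf'.2.2.2.2 v (Finset.mem_insert_self _ _) hvu hvB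
                have hau2 : a = a' := hall a w hf
                subst hau2
                have hww' : w = w' :=
                  hf'.2.2.2.2 w (Finset.mem_insert_of_mem hf.2.2.2.1)
                    (Ne.symm hf.2.2.1) hf.2.1
                have : (a, v) ∈ E := by rw [hvw', ← hww']; exact hf.2.2.2.1
                exact huv this
              · apply hau
                apply hall a' w'
                refine ⟨hf'.1, hf'.2.1, hf'.2.2.1, ?_, ?_⟩
                · have := hf'.2.2.2.1
                  rcases Finset.mem_insert.1 this with h | h
                  · exact absurd (congrArg Prod.fst h) hau
                  · exact h
                · intro x hx hxa hxB
                  exact hf'.2.2.2.2 x (Finset.mem_insert_of_mem hx) hxa hxB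
            · push_neg at hall
              obtain ⟨a', w', hf', hau⟩ := hall
              exact ⟨a', w', hf', fun h => absurd h hau⟩
        obtain ⟨a', w', hf', hgd⟩ := hgood
        have hcard' : Fintype.card V - (insert w' B).card ≤ k := by
          rw [Finset.card_insert_of_notMem hf'.2.1]
          omega
        obtain ⟨L, hL, hG⟩ := ih (insert w' B) (hZB.trans (Finset.subset_insert _ _)) hcard'
        exact ⟨(a', w') :: L, ⟨hf', hL⟩, hgd, hG⟩

/-! ### Structural facts about valid sequences -/

theorem vs_snd_fresh {E : Finset (V × V)} :
    ∀ {B : Finset V} {L : List (V × V)}, ValidSeq E B L → ∀ x ∈ B, x ∉ L.map Prod.snd := by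
  intro B L
  induction L generalizing B with
  | nil => intro _ x _ h; simp at h
  | cons p L ih =>
      intro h x hxB hmem
      obtain ⟨hf, hL⟩ := h
      rcases List.mem_cons.1 hmem with h1 | h1
      · rw [List.map_cons] at hmem
        rcases List.mem_cons.1 hmem with h2 | h2
        · exact hf.2.1 (h2 ▸ hxB)
        · exact ih hL x (Finset.mem_insert_of_mem hxB) h2
      · exact ih hL x (Finset.mem_insert_of_mem hxB) h1

theorem vs_snd_nodup {E : Finset (V × V)} :
    ∀ {B : Finset V} {L : List (V × V)}, ValidSeq E B L → (L.map Prod.snd).Nodup := by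
  intro B L
  induction L generalizing B with
  | nil => intro _; simp
  | cons p L ih =>
      intro h
      obtain ⟨hf, hL⟩ := h
      rw [List.map_cons, List.nodup_cons]
      exact ⟨vs_snd_fresh hL p.2 (Finset.mem_insert_self _ _), ih hL⟩

theorem vs_mem_univ {E : Finset (V × V)} :
    ∀ {B : Finset V} {L : List (V × V)}, ValidSeq E B L →
      ∀ x : V, x ∈ B ∨ x ∈ L.map Prod.snd := by
  intro B L
  induction L generalizing B with
  | nil => intro h x; left; rw [h]; exact Finset.mem_univ x
  | cons p L ih =>
      intro h x
      obtain ⟨hf, hL⟩ := h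
      rcases ih hL x with h1 | h1
      · rcases Finset.mem_insert.1 h1 with h2 | h2
        · right; rw [List.map_cons, h2]; exact List.mem_cons_self
        · left; exact h2
      · right; rw [List.map_cons]; exact List.mem_cons_of_mem _ h1

theorem vs_fst_not {E : Finset (V × V)} {a : V} :
    ∀ {B : Finset V} {L : List (V × V)}, ValidSeq E B L →
      (∀ x, (a, x) ∈ E → x ≠ a → x ∈ B) → a ∉ L.map Prod.fst := by
  intro B L
  induction L generalizing B with
  | nil => intro _ _ h; simp at h
  | cons p L ih =>
      intro h hall hmem
      obtain ⟨hf, hL⟩ := h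
      rw [List.map_cons] at hmem
      rcases List.mem_cons.1 hmem with h1 | h1
      · -- p.1 = a would force again
        have : p.2 ∈ B := hall p.2 (h1 ▸ hf.2.2.2.1) (h1 ▸ (Ne.symm hf.2.2.1))
        exact hf.2.1 this
      · refine ih hL (fun x hx hxa => Finset.mem_insert_of_mem (hall x hx hxa)) h1

theorem vs_fst_nodup {E : Finset (V × V)} :
    ∀ {B : Finset V} {L : List (V × V)}, ValidSeq E B L → (L.map Prod.fst).Nodup := by
  intro B L
  induction L generalizing B with
  | nil => intro _; simp
  | cons p L ih =>
      intro h
      obtain ⟨hf, hL⟩ := h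
      rw [List.map_cons, List.nodup_cons]
      constructor
      · apply vs_fst_not hL
        intro x hx hxa
        by_cases hxB : x ∈ B
        · exact Finset.mem_insert_of_mem hxB
        · rw [hf.2.2.2.2 x hx hxa hxB]; exact Finset.mem_insert_self _ _
      · exact ih hL

theorem vs_edge {E : Finset (V × V)} :
    ∀ {B : Finset V} {L : List (V × V)}, ValidSeq E B L →
      ∀ {a w : V}, (a, w) ∈ L → (a, w) ∈ E := by
  intro B L
  induction L generalizing B with
  | nil => intro _ a w h; simp at h
  | cons p L ih =>
      intro h a w hmem
      obtain ⟨hf, hL⟩ := h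
      rcases List.mem_cons.1 hmem with h1 | h1
      · have : p = (a, w) := h1.symm
        rw [this] at hf; exact hf.2.2.2.1
      · exact ih hL h1

/-- `x` is forced strictly before `w` in the sequence. -/
def Before (L : List (V × V)) (x w : V) : Prop :=
  x ∈ L.map Prod.snd ∧ (L.map Prod.snd).idxOf x < (L.map Prod.snd).idxOf w

theorem before_cons {L : List (V × V)} {p : V × V} {x w : V}
    (hx : x ≠ p.2) (hw : w ≠ p.2) (h : Before L x w) : Before (p :: L) x w := by
  obtain ⟨h1, h2⟩ := h
  refine ⟨by rw [List.map_cons]; exact List.mem_cons_of_mem _ h1, ?_⟩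
  rw [List.map_cons, List.idxOf_cons_ne _ (Ne.symm hx), List.idxOf_cons_ne _ (Ne.symm hw)]
  omega

theorem before_cons_head {L : List (V × V)} {p : V × V} {w : V}
    (hw : w ∈ L.map Prod.snd) (hwp : w ≠ p.2) : Before (p :: L) p.2 w := by
  refine ⟨by rw [List.map_cons]; exact List.mem_cons_self, ?_⟩
  rw [List.map_cons, List.idxOf_cons_self, List.idxOf_cons_ne _ (Ne.symm hwp)]
  omega

theorem vs_forcer_pos {E : Finset (V × V)} :
    ∀ {B : Finset V} {L : List (V × V)}, ValidSeq E B L →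
      ∀ {a w : V}, (a, w) ∈ L → a ∈ B ∨ Before L a w := by
  intro B L
  induction L generalizing B with
  | nil => intro _ a w h; simp at h
  | cons p L ih =>
      intro h a w hmem
      obtain ⟨hf, hL⟩ := h
      rcases List.mem_cons.1 hmem with h1 | h1
      · left; have : p = (a, w) := h1.symm; rw [this] at hf; exact hf.1
      · have hwL : w ∈ L.map Prod.snd := List.mem_map.2 ⟨(a, w), h1, rfl⟩
        have hwp : w ≠ p.2 := fun h => (vs_snd_fresh hL p.2 (Finset.mem_insert_self _ _)) (h ▸ hwL)
        rcases ih hL h1 with h2 | h2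
        · rcases Finset.mem_insert.1 h2 with h3 | h3
          · right; exact h3 ▸ before_cons_head hwL hwp
          · left; exact h3
        · right
          have hap : a ≠ p.2 := fun h => (vs_snd_fresh hL p.2 (Finset.mem_insert_self _ _)) (h ▸ h2.1)
          exact before_cons hap hwp h2

theorem vs_out {E : Finset (V × V)} :
    ∀ {B : Finset V} {L : List (V × V)}, ValidSeq E B L →
      ∀ {a w : V}, (a, w) ∈ L → ∀ b, (a, b) ∈ E → b ≠ w →
        b = a ∨ b ∈ B ∨ Before L b w := by
  intro B L
  induction L generalizing B with
  | nil => intro _ a w h; simp at h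
  | cons p L ih =>
      intro h a w hmem b hb hbw
      obtain ⟨hf, hL⟩ := h
      rcases List.mem_cons.1 hmem with h1 | h1
      · have hp : p = (a, w) := h1.symm
        rw [hp] at hf
        by_cases hba : b = a
        · left; exact hba
        · right; left
          by_cases hbB : b ∈ B
          · exact hbB
          · exact absurd (hf.2.2.2.2 b hb hba hbB) hbw
      · have hwL : w ∈ L.map Prod.snd := List.mem_map.2 ⟨(a, w), h1, rfl⟩
        have hwp : w ≠ p.2 := fun h => (vs_snd_fresh hL p.2 (Finset.mem_insert_self _ _)) (h ▸ hwL)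
        rcases ih hL h1 b hb hbw with h2 | h2 | h2
        · left; exact h2
        · rcases Finset.mem_insert.1 h2 with h3 | h3
          · right; right; exact h3 ▸ before_cons_head hwL hwp
          · right; left; exact h3
        · right; right
          have hbp : b ≠ p.2 := fun h => (vs_snd_fresh hL p.2 (Finset.mem_insert_self _ _)) (h ▸ h2.1)
          exact before_cons hbp hwp h2

theorem vs_good {E : Finset (V × V)} {u v : V} :
    ∀ {B : Finset V} {L : List (V × V)}, ValidSeq E B L → GoodSeq u v B L →
      ∀ {w : V}, (u, w) ∈ L → v ∈ B ∨ Before L v w := by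
  intro B L
  induction L generalizing B with
  | nil => intro _ _ w h; simp at h
  | cons p L ih =>
      intro h hg w hmem
      obtain ⟨hf, hL⟩ := h
      obtain ⟨hg1, hg2⟩ := hg
      rcases List.mem_cons.1 hmem with h1 | h1
      · left; exact hg1 (congrArg Prod.fst h1.symm)
      · have hwL : w ∈ L.map Prod.snd := List.mem_map.2 ⟨(u, w), h1, rfl⟩
        have hwp : w ≠ p.2 := fun h => (vs_snd_fresh hL p.2 (Finset.mem_insert_self _ _)) (h ▸ hwL)
        rcases ih hL hg2 h1 with h2 | h2
        · rcases Finset.mem_insert.1 h2 with h3 | h3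
          · right; exact h3 ▸ before_cons_head hwL hwp
          · left; exact h3
        · right
          have hvp : v ≠ p.2 := fun h => (vs_snd_fresh hL p.2 (Finset.mem_insert_self _ _)) (h ▸ h2.1)
          exact before_cons hvp hwp h2

end Stmt5

namespace Stmt5

variable {V : Type*} [Fintype V] [DecidableEq V]

/-- The chain successor map extracted from a forcing sequence. -/
def nextOf (L : List (V × V)) (a : V) : Option V :=
  (L.find? fun p => p.1 == a).map Prod.snd

/-- The time function extracted from a forcing sequence. -/
def timeOf (L : List (V × V)) (x : V) : ℕ :=
  if x ∈ L.map Prod.snd then (L.map Prod.snd).idxOf x + 2 else 1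

theorem nextOf_mem {L : List (V × V)} {a w : V} (h : nextOf L a = some w) : (a, w) ∈ L := by
  unfold nextOf at h
  obtain ⟨p, hp, hp2⟩ := Option.map_eq_some_iff.1 h
  have h1 : p.1 = a := by have := List.find?_some hp; simpa using this
  have hpL := List.mem_of_find?_eq_some hp
  have : p = (a, w) := Prod.ext h1 hp2
  rwa [this] at hpL

theorem mem_nextOf : ∀ {L : List (V × V)} {a w : V}, (L.map Prod.fst).Nodup →
    (a, w) ∈ L → nextOf L a = some w := by
  intro L
  induction L with
  | nil => intro a w _ h; simp at h
  | cons p L ih =>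
      intro a w hnd hmem
      rw [List.map_cons, List.nodup_cons] at hnd
      by_cases hpa : p.1 = a
      · have hfind : List.find? (fun q => q.1 == a) (p :: L) = some p :=
          List.find?_cons_of_pos (by simp [hpa])
        rcases List.mem_cons.1 hmem with h | h
        · unfold nextOf; rw [hfind]; simp [← h]
        · exfalso
          exact hnd.1 (hpa ▸ List.mem_map.2 ⟨(a, w), h, rfl⟩)
      · have hfind : List.find? (fun q => q.1 == a) (p :: L) = List.find? (fun q => q.1 == a) L :=
          List.find?_cons_of_neg (by simp [hpa])
        rcases List.mem_cons.1 hmem with h | h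
        · exact absurd (congrArg Prod.fst h.symm) hpa
        · unfold nextOf; rw [hfind]; exact ih hnd.2 h

theorem snd_unique : ∀ {L : List (V × V)} {a b w : V}, (L.map Prod.snd).Nodup →
    (a, w) ∈ L → (b, w) ∈ L → a = b := by
  intro L
  induction L with
  | nil => intro a b w _ h; simp at h
  | cons p L ih =>
      intro a b w hnd ha hb
      rw [List.map_cons, List.nodup_cons] at hnd
      rcases List.mem_cons.1 ha with h1 | h1 <;> rcases List.mem_cons.1 hb with h2 | h2
      · rw [← h2] at h1; exact congrArg Prod.fst h1
      · exfalso; apply hnd.1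
        have : w = p.2 := congrArg Prod.snd h1
        exact this ▸ List.mem_map.2 ⟨(b, w), h2, rfl⟩
      · exfalso; apply hnd.1
        have : w = p.2 := congrArg Prod.snd h2
        exact this ▸ List.mem_map.2 ⟨(a, w), h1, rfl⟩
      · exact ih hnd.2 h1 h2

end Stmt5


/-- if `Z` is a zero forcing set of both `G` and `G + {(u,v)}` (where
`(u,v) ∉ E(G)`), then there are node-disjoint chains `𝒞` partitioning `V` with sources `Z`
and a time function `T` such that both graphs are `(𝒞,T)`-constructed. -/
theorem stmt5 {V : Type*} [Fintype V] [DecidableEq V] (E : Finset (V × V)) (Z : Finset V)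
    (hZ : IsZFS E Z) (u v : V) (huv : (u, v) ∉ E)
    (hZ' : IsZFS (insert (u, v) E) Z) :
    ∃ (S : ChainSystem V) (T : V → ℕ), S.sources = Z ∧ S.IsTimeFunction T ∧
      S.IsConstructed T E ∧ S.IsConstructed T (insert (u, v) E) := by
  classical
  obtain ⟨L, hL, hG⟩ := Stmt5.exists_goodseq hZ huv hZ' (Fintype.card V) Z subset_rfl
    (by omega)
  set F := L.map Prod.snd with hFdef
  have hndF : F.Nodup := Stmt5.vs_snd_nodup hL
  have hndfst : (L.map Prod.fst).Nodup := Stmt5.vs_fst_nodup hL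
  have hmemF : ∀ x : V, x ∈ F ↔ x ∉ Z := by
    intro x
    constructor
    · intro hx hxZ; exact Stmt5.vs_snd_fresh hL x hxZ hx
    · intro hx; rcases Stmt5.vs_mem_univ hL x with h | h
      · exact absurd h hx
      · exact h
  set T := Stmt5.timeOf L with hTdef
  have hT_mem : ∀ x ∈ F, T x = F.idxOf x + 2 := by
    intro x hx; simp only [hTdef, Stmt5.timeOf, ← hFdef, if_pos hx]
  have hT_not : ∀ x ∉ F, T x = 1 := by
    intro x hx; simp only [hTdef, Stmt5.timeOf, ← hFdef, if_neg hx]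
  have key : ∀ x w : V, w ∈ F → (x ∈ Z ∨ Stmt5.Before L x w) → T x < T w := by
    intro x w hw h
    have hTw : T w = F.idxOf w + 2 := hT_mem w hw
    rcases h with h | h
    · rw [hT_not x (fun hxF => (hmemF x).1 hxF h), hTw]; omega
    · obtain ⟨hx, hlt⟩ := h
      rw [← hFdef] at hx hlt
      rw [hT_mem x hx, hTw]; omega
  have tlt : ∀ a w : V, (a, w) ∈ L → T a < T w := by
    intro a w hm
    have hw : w ∈ F := List.mem_map.2 ⟨(a, w), hm, rfl⟩
    exact key a w hw ((Stmt5.vs_forcer_pos hL hm).imp_right id)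
  -- the chain system
  have hinj : ∀ a b w : V, Stmt5.nextOf L a = some w → Stmt5.nextOf L b = some w → a = b :=
    fun a b w ha hb => Stmt5.snd_unique hndF (Stmt5.nextOf_mem ha) (Stmt5.nextOf_mem hb)
  have hacyc : ∀ x : V, ¬ Relation.TransGen (fun a b => Stmt5.nextOf L a = some b) x x := by
    intro x hx
    have : ∀ a b : V, Relation.TransGen (fun a b => Stmt5.nextOf L a = some b) a b → T a < T b := by
      intro a b h
      induction h with
      | single h => exact tlt _ _ (Stmt5.nextOf_mem h)
      | tail _ h ih => exact lt_trans ih (tlt _ _ (Stmt5.nextOf_mem h))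
    exact lt_irrefl _ (this x x hx)
  set S : ChainSystem V := ⟨Stmt5.nextOf L, hinj, hacyc⟩ with hSdef
  have hnext : ∀ a, S.next a = Stmt5.nextOf L a := fun _ => rfl
  have hsrc : S.sources = Z := by
    ext x
    simp only [ChainSystem.sources, Finset.mem_filter, Finset.mem_univ, true_and, hnext]
    constructor
    · intro h
      by_contra hxZ
      have hxF := (hmemF x).2 hxZ
      rw [hFdef] at hxF
      obtain ⟨p, hp, hp2⟩ := List.mem_map.1 hxF
      have h2 : Stmt5.nextOf L p.1 = some p.2 := Stmt5.mem_nextOf hndfst (by simpa using hp)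
      exact h p.1 (by rw [h2, hp2])
    · intro hxZ a ha
      exact (hmemF x).1 (by rw [hFdef]; exact List.mem_map.2 ⟨(a, x), Stmt5.nextOf_mem ha, rfl⟩) hxZ
  have hlenF : F.length = Fintype.card V - Z.card := by
    have h1 : F.toFinset = Zᶜ := by
      ext x; simp only [List.mem_toFinset, Finset.mem_compl]; exact hmemF x
    have h2 := List.toFinset_card_of_nodup hndF
    rw [h1, Finset.card_compl] at h2
    omega
  have hγ : S.γ = F.length + 1 := by
    have hm : S.m = Z.card := by rw [ChainSystem.m, hsrc]
    rw [ChainSystem.γ, hm, hlenF]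
  have hbounds : ∀ x : V, 1 ≤ T x ∧ T x ≤ S.γ := by
    intro x
    rw [hγ]
    by_cases hx : x ∈ F
    · rw [hT_mem x hx]
      have := List.idxOf_lt_length_iff.2 hx
      omega
    · rw [hT_not x hx]; omega
  have hsrc1 : ∀ x : V, S.IsSource x → T x = 1 := by
    intro x hx
    have hxZ : x ∈ Z := hsrc ▸ Finset.mem_filter.2 ⟨Finset.mem_univ x, hx⟩
    exact hT_not x (fun hxF => (hmemF x).1 hxF hxZ)
  have hns : ∀ x : V, ¬ S.IsSource x → x ∈ F := by
    intro x hx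
    by_contra hxF
    apply hx
    intro a ha
    exact hxF (by rw [hFdef]; exact List.mem_map.2 ⟨(a, x), Stmt5.nextOf_mem (hnext a ▸ ha), rfl⟩)
  have hinj2 : ∀ x y : V, ¬ S.IsSource x → ¬ S.IsSource y → x ≠ y → T x ≠ T y := by
    intro x y hx hy hne heq
    have hxF := hns x hx
    have hyF := hns y hy
    rw [hT_mem x hxF, hT_mem y hyF] at heq
    exact hne ((List.idxOf_inj hxF).1 (by omega))
  have hmono : ∀ a b : V, S.next a = some b → T a < T b :=
    fun a b h => tlt a b (Stmt5.nextOf_mem (hnext a ▸ h))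
  have hchain : ∀ p : V × V, p ∈ S.chainEdges ↔ Stmt5.nextOf L p.1 = some p.2 := by
    intro p
    simp only [ChainSystem.chainEdges, Finset.mem_filter, Finset.mem_univ, true_and, hnext]
  have hsubE : S.chainEdges ⊆ E := by
    intro p hp
    have h1 := Stmt5.vs_edge hL (Stmt5.nextOf_mem ((hchain p).1 hp))
    simpa using h1
  have hcore : ∀ p : V × V, p ∉ S.chainEdges → (p ∈ E ∨ p = (u, v)) → T p.2 ≤ S.Tmax T p.1 := by
    intro p hpc hp
    obtain ⟨a, b⟩ := p
    show T b ≤ S.Tmax T a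
    cases hn : Stmt5.nextOf L a with
    | none =>
        have h1 : S.Tmax T a = S.γ := by
          simp only [ChainSystem.Tmax, hnext, hn, Option.elim]
        rw [h1]; exact (hbounds b).2
    | some w =>
        have hmemL : (a, w) ∈ L := Stmt5.nextOf_mem hn
        have hwF : w ∈ F := by rw [hFdef]; exact List.mem_map.2 ⟨(a, w), hmemL, rfl⟩
        have hTmaxa : S.Tmax T a = T w - 1 := by
          simp only [ChainSystem.Tmax, hnext, hn, Option.elim]
        have hTw : 2 ≤ T w := by rw [hT_mem w hwF]; omega
        have hlt : T b < T w := by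
          rcases hp with hp | hp
          · have hbw : b ≠ w := by
              intro h
              exact hpc ((hchain (a, b)).2 (by rw [show ((a,b) : V × V).2 = w from h]; exact hn))
            rcases Stmt5.vs_out hL hmemL b hp hbw with h1 | h1
            · rw [h1]; exact tlt a w hmemL
            · exact key b w hwF h1
          · rw [Prod.mk.injEq] at hp
            obtain ⟨hau, hbv⟩ := hp
            subst hau; subst hbv
            exact key b w hwF (Stmt5.vs_good hL hG hmemL)
        rw [hTmaxa]; omega
  refine ⟨S, T, hsrc, ⟨hbounds, hsrc1, hinj2, hmono⟩,
    ⟨hsubE, fun p hp hpc => hcore p hpc (Or.inl hp)⟩,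
    ⟨hsubE.trans (Finset.subset_insert _ _), fun p hp hpc => hcore p hpc ?_⟩⟩
  rcases Finset.mem_insert.1 hp with h | h
  · exact Or.inr h
  · exact Or.inl h
end

section
/- Let G be a digraph on a finite vertex set V and let V_C be a zero forcing set of G. Then the following are equivalent: (i) for every pair (u,v) ∈ V × V with (u,v) ∉ E(G), the set V_C is not a zero forcing set of G + {(u,v)}; (ii) there exist a set of node-disjoint chains 𝒞 whose vertex sets partition V and whose set of sources is V_C, and a time function T for 𝒞, such that G equals the perfect (𝒞,T)-constructed graph 𝒢_perf^{𝒞,T}. -/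
set_option linter.unusedSectionVars false


section Runs
variable {V : Type*} [DecidableEq V]

/-- The black set after the first `k` forces of the run `L`, starting from `B`. -/
def stepSet (B : Finset V) (L : List (V × V)) (k : ℕ) : Finset V :=
  B ∪ ((L.take k).map Prod.snd).toFinset

/-- `L` is a valid run of forces in `E` starting from black set `B`. -/
def IsRun (E : Finset (V × V)) (B : Finset V) (L : List (V × V)) : Prop :=
  ∀ k (h : k < L.length), Forces E (stepSet B L k) (L[k]'h).1 (L[k]'h).2

lemma mem_take_map_snd {L : List (V × V)} {k : ℕ} {w : V} :
    w ∈ (L.take k).map Prod.snd ↔ ∃ j, ∃ h : j < L.length, j < k ∧ (L[j]'h).2 = w := by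
  rw [List.mem_iff_getElem]
  constructor
  · rintro ⟨i, hi, rfl⟩
    rw [List.length_map, List.length_take, lt_min_iff] at hi
    exact ⟨i, hi.2, hi.1, by rw [List.getElem_map, List.getElem_take]⟩
  · rintro ⟨j, h, hk, rfl⟩
    refine ⟨j, by rw [List.length_map, List.length_take, lt_min_iff]; exact ⟨hk, h⟩, ?_⟩
    rw [List.getElem_map, List.getElem_take]

lemma mem_stepSet {B : Finset V} {L : List (V × V)} {k : ℕ} {w : V} :
    w ∈ stepSet B L k ↔ w ∈ B ∨ ∃ j, ∃ h : j < L.length, j < k ∧ (L[j]'h).2 = w := by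
  rw [stepSet, Finset.mem_union, List.mem_toFinset, mem_take_map_snd]

lemma stepSet_zero {B : Finset V} {L : List (V × V)} : stepSet B L 0 = B := by
  simp [stepSet]

lemma stepSet_cons {B : Finset V} {p : V × V} {L : List (V × V)} {k : ℕ} :
    stepSet B (p :: L) (k + 1) = stepSet (insert p.2 B) L k := by
  ext w
  simp only [stepSet, List.take_succ_cons, List.map_cons, List.toFinset_cons,
    Finset.mem_union, Finset.mem_insert, List.mem_toFinset]
  tauto

lemma stepSet_mono {B : Finset V} {L : List (V × V)} {j k : ℕ} (hjk : j ≤ k) :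
    stepSet B L j ⊆ stepSet B L k := by
  intro w hw
  rw [mem_stepSet] at hw ⊢
  rcases hw with hw | ⟨i, hi, hik, rfl⟩
  · exact Or.inl hw
  · exact Or.inr ⟨i, hi, by omega, rfl⟩

lemma run_of_reach {E : Finset (V × V)} {B C : Finset V} (h : ZFReach E B C) :
    ∃ L : List (V × V), IsRun E B L ∧ C = stepSet B L L.length := by
  induction h with
  | refl B => exact ⟨[], fun k h => by simp at h, by simp [stepSet]⟩
  | step h hr ih =>
    obtain ⟨L, hL, hC⟩ := ih
    rename_i B C u v
    refine ⟨(u, v) :: L, ?_, ?_⟩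
    · intro k hk
      match k with
      | 0 => simpa [stepSet_zero] using h
      | k + 1 =>
        have := hL k (by simpa using hk)
        rw [stepSet_cons]
        simpa using this
    · rw [List.length_cons, stepSet_cons]
      exact hC

lemma reach_of_run {E : Finset (V × V)} {B : Finset V} {L : List (V × V)}
    (hL : IsRun E B L) : ZFReach E B (stepSet B L L.length) := by
  induction L generalizing B with
  | nil => simpa [stepSet_zero] using ZFReach.refl B
  | cons p L ih =>
    have h0 := hL 0 (by simp)
    rw [stepSet_zero] at h0
    rw [List.length_cons, stepSet_cons]
    exact ZFReach.step h0 (ih fun k h => by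
      have := hL (k + 1) (by simpa using h)
      rw [stepSet_cons] at this
      simpa using this)

end Runs

section Destroy
variable {V : Type*} [Fintype V] [DecidableEq V]

lemma mem_perfEdges {S : ChainSystem V} {T : V → ℕ} {a b : V} :
    (a, b) ∈ S.perfEdges T ↔ S.next a = some b ∨ T b ≤ S.Tmax T a := by
  simp [ChainSystem.perfEdges, ChainSystem.chainEdges]

lemma destroy {S : ChainSystem V} {T : V → ℕ} {VC : Finset V}
    (hsrc : S.sources = VC) (hT : S.IsTimeFunction T) {u v : V}
    (huv : (u, v) ∉ S.perfEdges T) : ¬ IsZFS (insert (u, v) (S.perfEdges T)) VC := by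
  obtain ⟨hT1, hT2, hT3, hT4⟩ := hT
  rw [mem_perfEdges, not_or, not_le] at huv
  obtain ⟨hnc, hTm⟩ := huv
  -- u is not a sink
  have hVCsrc : ∀ a, a ∈ VC ↔ S.IsSource a := by
    intro a
    rw [← hsrc, ChainSystem.sources, Finset.mem_filter]
    exact ⟨fun h => h.2, fun h => ⟨Finset.mem_univ a, h⟩⟩
  obtain ⟨x, hnu⟩ : ∃ x, S.next u = some x := by
    rcases h : S.next u with _ | x
    · exfalso
      have : S.Tmax T u = S.γ := by rw [ChainSystem.Tmax, h]; rfl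
      rw [this] at hTm
      exact absurd (hT1 v).2 (not_le.2 hTm)
    · exact ⟨x, rfl⟩
  have hTmaxu : S.Tmax T u = T x - 1 := by rw [ChainSystem.Tmax, hnu]; rfl
  have hTx2 : 2 ≤ T x := by have := hT4 u x hnu; have := (hT1 u).1; omega
  have hvx : v ≠ x := fun h => hnc (h ▸ hnu)
  have hxns : ¬ S.IsSource x := fun h => h u hnu
  have hTvx : T x < T v := by
    have hge : T x ≤ T v := by omega
    rcases eq_or_lt_of_le hge with h | h
    · exfalso
      have hvns : ¬ S.IsSource v := fun hs => by
        have := hT2 v hs; omega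
      exact hT3 x v hxns hvns (Ne.symm hvx) h
    · exact h
  have hvns : ¬ S.IsSource v := fun hs => by have := hT2 v hs; omega
  -- helper edges
  set E' := insert (u, v) (S.perfEdges T) with hE'
  have hedge : ∀ y w, T w ≤ S.Tmax T y → (y, w) ∈ E' := fun y w h =>
    Finset.mem_insert_of_mem (mem_perfEdges.2 (Or.inr h))
  have hchainE : ∀ y z, S.next y = some z → (y, z) ∈ E' := fun y z h =>
    Finset.mem_insert_of_mem (mem_perfEdges.2 (Or.inl h))
  have hTmax_chain : ∀ y z, S.next y = some z → S.Tmax T y = T z - 1 := by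
    intro y z h; rw [ChainSystem.Tmax, h]; rfl
  -- the invariant
  set J : Finset V → Prop :=
    fun B => v ∉ B ∧ x ∉ B ∧ ∀ a ∈ B, ∀ w, T w < T a → w ∈ B with hJ
  -- edge membership characterization
  have hmemE' : ∀ y z : V, (y, z) ∈ E' ↔ (y = u ∧ z = v) ∨ (y, z) ∈ S.perfEdges T := by
    intro y z
    rw [hE', Finset.mem_insert, Prod.mk.injEq]
  -- one step preserves J
  have Jstep : ∀ B y z, J B → Forces E' B y z → J (insert z B) := by
    intro B y z hJB hf
    obtain ⟨hv, hx, hcl⟩ := hJB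
    obtain ⟨hyB, hzB, hyz, hyzE, hforce⟩ := hf
    -- z ≠ v
    have hzv : z ≠ v := by
      intro h
      subst h
      rcases (hmemE' y z).1 hyzE with ⟨rfl, _⟩ | hperf
      · -- y = u forces v, but x is a white out-neighbor
        exact hvx (hforce x (hchainE y x hnu) (fun h => hx (h ▸ hyB)) hx).symm
      · have hTmy : T x ≤ S.Tmax T y := by
          rcases mem_perfEdges.1 hperf with hch | hle
          · rw [hTmax_chain y z hch]; omega
          · omega
        exact hvx ((hforce x (hedge y x hTmy) (fun h => hx (h ▸ hyB)) hx)).symm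
    -- z ≠ x
    have hzx : z ≠ x := by
      intro h
      subst h
      rcases (hmemE' y z).1 hyzE with ⟨rfl, hzv'⟩ | hperf
      · exact hvx hzv'.symm
      · rcases hyn : S.next y with _ | x'
        · -- y sink: Tmax y = γ ≥ T v, so v is a white out-neighbor ≠ z
          have : S.Tmax T y = S.γ := by rw [ChainSystem.Tmax, hyn]; rfl
          have hvE : (y, v) ∈ E' := hedge y v (this ▸ (hT1 v).2)
          exact hvx (hforce v hvE (fun h => hv (h ▸ hyB)) hv)
        · by_cases hx'x : x' = z
          · -- chain edge into x = z, so y = u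
            have hyu : y = u := S.inj y u z (hx'x ▸ hyn) hnu
            subst hyu
            have hvE : (y, v) ∈ E' := Finset.mem_insert_self _ _
            exact hvx (hforce v hvE (fun h => hv (h ▸ hyB)) hv)
          · have hTzy : T z ≤ S.Tmax T y := by
              rcases mem_perfEdges.1 hperf with hch | hle
              · exact absurd (Option.some.inj (hyn ▸ hch)) hx'x
              · exact hle
            have hTzx' : T z < T x' := by
              have h1 := hTmax_chain y x' hyn
              have h2 := (hT1 x').1
              omega
            by_cases hx'B : x' ∈ B
            · exact hzB (hcl x' hx'B z hTzx')
            · exact hx'x (hforce x' (hchainE y x' hyn) (fun h => hx'B (h ▸ hyB)) hx'B)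
    refine ⟨?_, ?_, ?_⟩
    · intro h
      rcases Finset.mem_insert.1 h with h | h
      · exact hzv h.symm
      · exact hv h
    · intro h
      rcases Finset.mem_insert.1 h with h | h
      · exact hzx h.symm
      · exact hx h
    · intro a ha w hw
      rcases Finset.mem_insert.1 ha with rfl | haB
      · -- a = z, the newly forced vertex
        have hTzy : T a - 1 ≤ S.Tmax T y := by
          rcases (hmemE' y a).1 hyzE with ⟨_, rfl⟩ | hperf
          · exact absurd rfl hzv
          · rcases mem_perfEdges.1 hperf with hch | hle
            · rw [hTmax_chain y a hch]
            · omega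
        have hwE : (y, w) ∈ E' := hedge y w (by omega)
        by_cases hwB : w ∈ B
        · exact Finset.mem_insert_of_mem hwB
        · by_cases hwy : w = y
          · exact Finset.mem_insert_of_mem (hwy ▸ hyB)
          · exact (hforce w hwE hwy hwB) ▸ Finset.mem_insert_self _ _
      · exact Finset.mem_insert_of_mem (hcl a haB w hw)
  -- J is preserved along any reach, so univ is never reached
  have key : ∀ B C : Finset V, ZFReach E' B C → C = Finset.univ → J B → False := by
    intro B C h
    induction h with
    | refl B =>
      rintro rfl hJB
      exact hJB.1 (Finset.mem_univ v)
    | step hf hr ih =>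
      intro hC hJB
      exact ih hC (Jstep _ _ _ hJB hf)
  intro hZ
  refine key VC Finset.univ hZ rfl ⟨?_, ?_, ?_⟩
  · intro h
    have := hT2 v ((hVCsrc v).1 h)
    omega
  · intro h
    exact hxns ((hVCsrc x).1 h)
  · intro a ha w hw
    have := hT2 a ((hVCsrc a).1 ha)
    have := (hT1 w).1
    omega

lemma construct {E : Finset (V × V)} {VC : Finset V} (hVC : IsZFS E VC)
    (hmax : ∀ u v : V, (u, v) ∉ E → ¬ IsZFS (insert (u, v) E) VC) :
    ∃ (S : ChainSystem V) (T : V → ℕ),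
      S.sources = VC ∧ S.IsTimeFunction T ∧ E = S.perfEdges T := by
  classical
  obtain ⟨L, hRun, hU⟩ := run_of_reach hVC
  -- basic facts about the run
  have f1 : ∀ k (h : k < L.length), (L[k]'h).2 ∉ stepSet VC L k := fun k h => (hRun k h).2.1
  have f2 : ∀ k (h : k < L.length), (L[k]'h).1 ∈ stepSet VC L k := fun k h => (hRun k h).1
  have fmem : ∀ k (h : k < L.length) (j : ℕ), k < j → (L[k]'h).2 ∈ stepSet VC L j := by
    intro k h j hkj
    exact mem_stepSet.2 (Or.inr ⟨k, h, hkj, rfl⟩)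
  have hdisj : ∀ k (h : k < L.length), (L[k]'h).2 ∉ VC := by
    intro k h hk
    exact f1 k h (mem_stepSet.2 (Or.inl hk))
  -- targets are distinct
  have tgNe : ∀ i j (hi : i < L.length) (hj : j < L.length), i < j → (L[i]'hi).2 ≠ (L[j]'hj).2 := by
    intro i j hi hj hij heq
    exact f1 j hj (heq ▸ fmem i hi j hij)
  have htglen : (L.map Prod.snd).length = L.length := by rw [List.length_map]
  have tgNodup : (L.map Prod.snd).Nodup := by
    rw [List.nodup_iff_injective_get]
    intro i j heq
    by_contra hne
    have hne' : (i : ℕ) ≠ (j : ℕ) := fun h => hne (Fin.ext h)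
    have hi : (i : ℕ) < L.length := htglen ▸ i.2
    have hj : (j : ℕ) < L.length := htglen ▸ j.2
    simp only [List.get_eq_getElem, List.getElem_map] at heq
    rcases Nat.lt_or_ge (i : ℕ) (j : ℕ) with h | h
    · exact tgNe _ _ hi hj h heq
    · exact tgNe _ _ hj hi (by omega) heq.symm
  -- forcers are distinct
  have fcNe : ∀ i j (hi : i < L.length) (hj : j < L.length), i < j → (L[i]'hi).1 ≠ (L[j]'hj).1 := by
    intro i j hi hj hij heq
    have h5 := (hRun i hi).2.2.2.2
    have hj4 := (hRun j hj).2.2.2.1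
    have := h5 (L[j]'hj).2 (heq ▸ hj4)
      (fun h => f1 j hj (h ▸ stepSet_mono (le_of_lt hij) (f2 i hi) : _))
      (fun h => f1 j hj (stepSet_mono (le_of_lt hij) h))
    exact f1 j hj (this ▸ fmem i hi j hij)
  have fcNodup : (L.map Prod.fst).Nodup := by
    rw [List.nodup_iff_injective_get]
    intro i j heq
    by_contra hne
    have hi : (i : ℕ) < L.length := by have := i.2; simpa using this
    have hj : (j : ℕ) < L.length := by have := j.2; simpa using this
    simp only [List.get_eq_getElem, List.getElem_map] at heq
    have hne' : (i : ℕ) ≠ (j : ℕ) := fun h => hne (Fin.ext h)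
    rcases Nat.lt_or_ge (i : ℕ) (j : ℕ) with h | h
    · exact fcNe _ _ hi hj h heq
    · exact fcNe _ _ hj hi (by omega) heq.symm
  -- the time function
  set T : V → ℕ := fun v => if v ∈ VC then 1 else (L.map Prod.snd).idxOf v + 2 with hTf
  have hTtg : ∀ k (h : k < L.length), T (L[k]'h).2 = k + 2 := by
    intro k h
    have hk : (L.map Prod.snd).idxOf (L[k]'h).2 = k := by
      have : (L[k]'h).2 = (L.map Prod.snd)[k]'(by omega) := by
        rw [List.getElem_map]
      rw [this, List.Nodup.idxOf_getElem tgNodup]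
    rw [hTf]
    simp only [if_neg (hdisj k h)]
    rw [hk]
  have hTVC : ∀ w ∈ VC, T w = 1 := fun w hw => by rw [hTf]; simp [hw]
  have hall : ∀ w : V, w ∈ VC ∨ ∃ j, ∃ h : j < L.length, (L[j]'h).2 = w := by
    intro w
    have : w ∈ stepSet VC L L.length := by rw [← hU]; exact Finset.mem_univ w
    rcases mem_stepSet.1 this with h | ⟨j, hj, _, hw⟩
    · exact Or.inl h
    · exact Or.inr ⟨j, hj, hw⟩
  have hTmem : ∀ (w : V) (k : ℕ), w ∈ stepSet VC L k ↔ T w ≤ k + 1 := by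
    intro w k
    constructor
    · intro hw
      rcases mem_stepSet.1 hw with hw | ⟨j, hj, hjk, rfl⟩
      · rw [hTVC w hw]; omega
      · rw [hTtg j hj]; omega
    · intro hw
      rcases hall w with hw' | ⟨j, hj, rfl⟩
      · exact mem_stepSet.2 (Or.inl hw')
      · rw [hTtg j hj] at hw
        exact mem_stepSet.2 (Or.inr ⟨j, hj, by omega, rfl⟩)
  -- the successor map
  set nextf : V → Option V := fun u => (L.find? fun p => p.1 == u).map Prod.snd with hnf
  have hnext : ∀ u w, nextf u = some w ↔ (u, w) ∈ L := by
    intro u w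
    constructor
    · intro h
      rw [hnf] at h
      simp only [Option.map_eq_some_iff] at h
      obtain ⟨p, hp, rfl⟩ := h
      have h1 : p.1 = u := by simpa using List.find?_some hp
      have h2 : p ∈ L := List.mem_of_find?_eq_some hp
      rwa [← h1, Prod.mk.eta]
    · intro h
      have : ((L.find? fun p => p.1 == u)).isSome := by
        rw [List.find?_isSome]
        exact ⟨(u, w), h, by simp⟩
      obtain ⟨p, hp⟩ := Option.isSome_iff_exists.1 this
      have h1 : p.1 = u := by simpa using List.find?_some hp
      have h2 : p ∈ L := List.mem_of_find?_eq_some hp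
      have : p = (u, w) := List.inj_on_of_nodup_map fcNodup h2 h (by rw [h1])
      rw [hnf]
      simp only [Option.map_eq_some_iff]
      exact ⟨p, hp, by rw [this]⟩
  have hmemidx : ∀ u w, (u, w) ∈ L → ∃ k, ∃ h : k < L.length, L[k]'h = (u, w) :=
    fun u w h => List.mem_iff_getElem.1 h
  -- increasing along chains
  have Tstep : ∀ a b, nextf a = some b → T a < T b := by
    intro a b h
    obtain ⟨k, hk, hkab⟩ := hmemidx a b ((hnext a b).1 h)
    have hb : T b = k + 2 := by rw [← hTtg k hk, hkab]
    have ha : T a ≤ k + 1 := by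
      have := f2 k hk
      rw [hkab] at this
      exact (hTmem a k).1 this
    omega
  have hacyc : ∀ v, ¬ Relation.TransGen (fun a b => nextf a = some b) v v := by
    intro v hv
    have : ∀ a b, Relation.TransGen (fun a b => nextf a = some b) a b → T a < T b := by
      intro a b h
      induction h with
      | single h => exact Tstep _ _ h
      | tail _ hs ih => exact lt_trans ih (Tstep _ _ hs)
    exact absurd (this v v hv) (lt_irrefl _)
  have hinj : ∀ u u' w, nextf u = some w → nextf u' = some w → u = u' := by
    intro u u' w h h'
    have h1 := (hnext u w).1 h
    have h2 := (hnext u' w).1 h'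
    have := List.inj_on_of_nodup_map tgNodup h1 h2 rfl
    exact congrArg Prod.fst this
  set S : ChainSystem V := ⟨nextf, hinj, hacyc⟩ with hS
  have hSnext : ∀ u, S.next u = nextf u := fun _ => rfl
  -- sources = VC
  have hsrc_iff : ∀ w : V, (∀ u, nextf u ≠ some w) ↔ w ∈ VC := by
    intro w
    constructor
    · intro h
      rcases hall w with hw | ⟨j, hj, rfl⟩
      · exact hw
      · exfalso
        have hmem : ((L[j]'hj).1, (L[j]'hj).2) ∈ L := by
          rw [Prod.mk.eta]; exact List.getElem_mem _
        exact h (L[j]'hj).1 ((hnext _ _).2 hmem)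
    · intro hw u h
      obtain ⟨k, hk, hkab⟩ := hmemidx u w ((hnext u w).1 h)
      have : (L[k]'hk).2 = w := by rw [hkab]
      exact hdisj k hk (this ▸ hw)
  have hsources : S.sources = VC := by
    ext w
    rw [ChainSystem.sources, Finset.mem_filter]
    constructor
    · intro h
      exact (hsrc_iff w).1 h.2
    · intro h
      exact ⟨Finset.mem_univ w, (hsrc_iff w).2 h⟩
  -- cardinality: γ = L.length + 1
  have hcard : Fintype.card V = VC.card + L.length := by
    have h1 : (Finset.univ : Finset V) = VC ∪ (L.map Prod.snd).toFinset := by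
      rw [hU]
      rw [stepSet, List.take_length]
    have h2 : Disjoint VC (L.map Prod.snd).toFinset := by
      rw [Finset.disjoint_left]
      intro w hw hw'
      rw [List.mem_toFinset] at hw'
      obtain ⟨p, hp, rfl⟩ := List.mem_map.1 hw'
      obtain ⟨k, hk, hkp⟩ := List.mem_iff_getElem.1 hp
      exact hdisj k hk (hkp ▸ hw)
    rw [← Finset.card_univ, h1, Finset.card_union_of_disjoint h2,
      List.toFinset_card_of_nodup tgNodup, htglen]
  have hγ : S.γ = L.length + 1 := by
    rw [ChainSystem.γ, ChainSystem.m, hsources, hcard]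
    omega
  -- Tmax along chain edges
  have hTmaxc : ∀ a b, nextf a = some b → S.Tmax T a = T b - 1 := by
    intro a b h
    rw [ChainSystem.Tmax, hSnext, h]
    rfl
  have hTmaxsink : ∀ a, nextf a = none → S.Tmax T a = S.γ := by
    intro a h
    rw [ChainSystem.Tmax, hSnext, h]
    rfl
  have hTbound : ∀ w : V, 1 ≤ T w ∧ T w ≤ S.γ := by
    intro w
    rcases hall w with hw | ⟨j, hj, rfl⟩
    · rw [hTVC w hw]; omega
    · rw [hTtg j hj, hγ]; omega
  refine ⟨S, T, hsources, ⟨hTbound, ?_, ?_, ?_⟩, ?_⟩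
  · -- T = 1 on sources
    intro w hw
    exact hTVC w ((hsrc_iff w).1 hw)
  · -- injectivity on non-sources
    intro a b ha hb hab
    have haVC : a ∉ VC := fun h => ha ((hsrc_iff a).2 h)
    have hbVC : b ∉ VC := fun h => hb ((hsrc_iff b).2 h)
    obtain ⟨i, hi, hia⟩ := (hall a).resolve_left haVC
    obtain ⟨j, hj, hjb⟩ := (hall b).resolve_left hbVC
    rw [← hia, ← hjb, hTtg i hi, hTtg j hj]
    intro h
    have : i = j := by omega
    subst this
    exact hab (hia ▸ hjb)
  · -- monotone along chains
    intro a b h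
    exact Tstep a b (hSnext a ▸ h)
  · -- E = perfEdges
    ext p
    obtain ⟨a, b⟩ := p
    rw [mem_perfEdges, hSnext]
    constructor
    · intro hab
      rcases hn : nextf a with _ | w
      · exact Or.inr ((hTmaxsink a hn) ▸ (hTbound b).2)
      · by_cases hwb : w = b
        · exact Or.inl (by rw [← hwb])
        · right
          obtain ⟨k, hk, hkab⟩ := hmemidx a w ((hnext a w).1 hn)
          have hTw : T w = k + 2 := by rw [← hTtg k hk, hkab]
          have hTmaxa : S.Tmax T a = k + 1 := by rw [hTmaxc a w hn, hTw]; omega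
          rw [hTmaxa]
          rw [← hTmem b k]
          by_cases hbB : b ∈ stepSet VC L k
          · exact hbB
          · exfalso
            by_cases hba : b = a
            · subst hba
              have := f2 k hk
              rw [hkab] at this
              exact hbB this
            · have h5 := (hRun k hk).2.2.2.2
              have := h5 b (by rw [hkab]; exact hab) (by rw [hkab]; exact hba) hbB
              rw [hkab] at this
              exact hwb this.symm
    · intro h
      rcases h with hch | hle
      · obtain ⟨k, hk, hkab⟩ := hmemidx a b ((hnext a b).1 hch)
        have := (hRun k hk).2.2.2.1
        rwa [hkab] at this
      · by_contra habE
        refine hmax a b habE ?_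
        rw [IsZFS, hU]
        apply reach_of_run
        intro k hk
        obtain ⟨h1, h2, h3, h4, h5⟩ := hRun k hk
        refine ⟨h1, h2, h3, Finset.mem_insert_of_mem h4, ?_⟩
        intro w hw hwne hwB
        rcases Finset.mem_insert.1 hw with hw' | hw'
        · -- the new edge: w = b and L[k].1 = a
          exfalso
          rw [Prod.mk.injEq] at hw'
          obtain ⟨hfa, rfl⟩ := hw'
          -- next a = some L[k].2
          have hmem : (a, (L[k]'hk).2) ∈ L := by
            rw [← hfa, Prod.mk.eta]; exact List.getElem_mem _
          have hna : nextf a = some (L[k]'hk).2 := (hnext _ _).2 hmem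
          have hTmaxa : S.Tmax T a = k + 1 := by
            rw [hTmaxc a _ hna, hTtg k hk]; omega
          rw [hTmaxa] at hle
          exact hwB ((hTmem w k).2 (by omega))
        · exact h5 w hw' hwne hwB

end Destroy

/-- adding any single new edge destroys the zero forcing property of `V_C`
iff `G` is a perfect `(𝒞,T)`-constructed graph for some node-disjoint chains `𝒞`
partitioning `V` with sources `V_C` and time function `T`. -/
theorem stmt6 {V : Type*} [Fintype V] [DecidableEq V] (E : Finset (V × V)) (VC : Finset V)
    (hVC : IsZFS E VC) :
    (∀ u v : V, (u, v) ∉ E → ¬ IsZFS (insert (u, v) E) VC) ↔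
      ∃ (S : ChainSystem V) (T : V → ℕ),
        S.sources = VC ∧ S.IsTimeFunction T ∧ E = S.perfEdges T := by
  constructor
  · intro h
    exact construct hVC h
  · rintro ⟨S, T, hsrc, hT, rfl⟩ u v huv
    exact destroy hsrc hT huv
end

section
/- Let 𝒞 = {C_1,…,C_m} be a set of m node-disjoint chains whose vertex sets partition a set V with |V| = n, and let T be a time function for 𝒞. Then the edge set E_perf of the perfect (𝒞,T)-constructed graph satisfies |E_perf| = n(n+1)/2 + m(2n − m − 1)/2. -/
open Finset

namespace ZF7
variable {V : Type*} [Fintype V] [DecidableEq V] (S : ChainSystem V) (T : V → ℕ)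

def nonsources : Finset V := Finset.univ.filter fun v => ¬ ∀ u, S.next u ≠ some v
def nonsinks : Finset V := Finset.univ.filter fun v => ¬ S.next v = none

lemma card_nonsources : (nonsources S).card = Fintype.card V - S.m := by
  have h := Finset.card_filter_add_card_filter_not
    (s := (univ : Finset V)) (p := fun v => ∀ u, S.next u ≠ some v)
  have hm : S.m ≤ Fintype.card V := Finset.card_filter_le _ _
  simp only [ChainSystem.m, ChainSystem.sources, nonsources, card_univ] at *
  omega

lemma sum_nonsinks_eq (f : V → ℕ) :
    ∑ u ∈ nonsinks S, f u = ∑ p ∈ S.chainEdges, f p.1 := by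
  refine (Finset.sum_bij (fun p _ => p.1) ?_ ?_ ?_ ?_).symm
  · intro p hp
    simp only [ChainSystem.chainEdges, mem_filter, mem_univ, true_and] at hp
    simp [nonsinks, hp]
  · intro p hp q hq h
    simp only [ChainSystem.chainEdges, mem_filter, mem_univ, true_and] at hp hq
    rw [h] at hp
    have := hp.symm.trans hq
    exact Prod.ext h (Option.some_injective _ this)
  · intro u hu
    simp only [nonsinks, mem_filter, mem_univ, true_and] at hu
    obtain ⟨w, hw⟩ := Option.ne_none_iff_exists'.mp hu
    exact ⟨(u, w), by simp [ChainSystem.chainEdges, hw], rfl⟩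
  · intro p hp; rfl

lemma sum_chainEdges_eq (g : V → ℕ) :
    ∑ p ∈ S.chainEdges, g p.2 = ∑ w ∈ nonsources S, g w := by
  refine Finset.sum_bij (fun p _ => p.2) ?_ ?_ ?_ ?_
  · intro p hp
    simp only [ChainSystem.chainEdges, mem_filter, mem_univ, true_and] at hp
    simp only [nonsources, mem_filter, mem_univ, true_and]
    push_neg
    exact ⟨p.1, hp⟩
  · intro p hp q hq h
    simp only [ChainSystem.chainEdges, mem_filter, mem_univ, true_and] at hp hq
    rw [h] at hp
    exact Prod.ext (S.inj _ _ _ hp hq) h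
  · intro w hw
    simp only [nonsources, mem_filter, mem_univ, true_and] at hw
    push_neg at hw
    obtain ⟨u, hu⟩ := hw
    exact ⟨(u, w), by simp [ChainSystem.chainEdges, hu], rfl⟩
  · intro p hp; rfl

variable (hT : S.IsTimeFunction T)
include hT

lemma two_le_T {w : V} (hw : ¬ S.IsSource w) : 2 ≤ T w := by
  unfold ChainSystem.IsSource at hw
  push_neg at hw
  obtain ⟨u, hu⟩ := hw
  have h1 := (hT.1 u).1
  have h2 := hT.2.2.2 u w hu
  omega

lemma injOn_T : Set.InjOn T (nonsources S : Set V) := by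
  intro a ha b hb hab
  simp only [nonsources, coe_filter, Set.mem_setOf_eq, mem_univ, true_and] at ha hb
  by_contra hne
  exact hT.2.2.1 a b ha hb hne hab

lemma image_T : (nonsources S).image T = Finset.Icc 2 S.γ := by
  apply Finset.eq_of_subset_of_card_le
  · intro t ht
    simp only [mem_image] at ht
    obtain ⟨w, hw, rfl⟩ := ht
    simp only [nonsources, mem_filter, mem_univ, true_and] at hw
    rw [mem_Icc]
    exact ⟨two_le_T S T hT hw, (hT.1 w).2⟩
  · rw [Finset.card_image_of_injOn (injOn_T S T hT), card_nonsources,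
      Nat.card_Icc]
    simp only [ChainSystem.γ]
    omega

lemma fiber_count {k : ℕ} (h1 : 1 ≤ k) (h2 : k ≤ S.γ) :
    (univ.filter fun v => T v ≤ k).card = S.m + (k - 1) := by
  classical
  have hsplit := Finset.card_filter_add_card_filter_not
    (s := univ.filter fun v => T v ≤ k) (p := fun v => ∀ u, S.next u ≠ some v)
  rw [Finset.filter_filter, Finset.filter_filter] at hsplit
  have e1 : (univ.filter fun v => T v ≤ k ∧ ∀ u, S.next u ≠ some v) =
      S.sources := by
    ext v
    simp only [mem_filter, mem_univ, true_and, ChainSystem.sources]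
    constructor
    · exact fun h => h.2
    · intro h
      refine ⟨?_, h⟩
      rw [hT.2.1 v h]
      exact h1
  have e2 : (univ.filter fun v => T v ≤ k ∧ ¬ ∀ u, S.next u ≠ some v) =
      (nonsources S).filter fun v => T v ≤ k := by
    ext v
    simp only [mem_filter, mem_univ, true_and, nonsources]
    tauto
  rw [e1, e2] at hsplit
  have e3 : (((nonsources S).filter fun v => T v ≤ k).card)
      = ((Finset.Icc 2 S.γ).filter fun t => t ≤ k).card := by
    rw [← image_T S T hT, Finset.filter_image,
      Finset.card_image_of_injOn ((injOn_T S T hT).mono (by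
        intro x hx
        simp only [coe_filter, Set.mem_setOf_eq] at hx
        exact hx.1))]
  have e4 : ((Finset.Icc 2 S.γ).filter fun t => t ≤ k) = Finset.Icc 2 k := by
    ext t
    simp only [mem_filter, mem_Icc]
    omega
  rw [e3, e4, Nat.card_Icc] at hsplit
  have := hsplit
  simp only [ChainSystem.m]
  omega

end ZF7


/-- the perfect `(𝒞,T)`-constructed graph has exactly
`n(n+1)/2 + m(2n − m − 1)/2` edges (stated doubled, to avoid division). -/
theorem stmt7 {V : Type*} [Fintype V] [DecidableEq V] (S : ChainSystem V) (T : V → ℕ)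
    (hT : S.IsTimeFunction T) :
    2 * (S.perfEdges T).card =
      Fintype.card V * (Fintype.card V + 1) +
        S.m * (2 * Fintype.card V - S.m - 1) := by
  classical
  have hmn : S.m ≤ Fintype.card V := Finset.card_filter_le _ _
  set n := Fintype.card V with hn
  set M := S.m with hM
  obtain ⟨a, hna⟩ : ∃ a, n = M + a := ⟨n - M, by omega⟩
  have hγ : S.γ = a + 1 := by
    have : S.γ = n - M + 1 := rfl
    omega
  -- bounds on Tmax
  have hTmax : ∀ u, 1 ≤ S.Tmax T u ∧ S.Tmax T u ≤ S.γ := by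
    intro u
    cases hnu : S.next u with
    | none => simp [ChainSystem.Tmax, hnu]; omega
    | some w =>
      have hw : ¬ S.IsSource w := fun h => h u hnu
      have h2 := ZF7.two_le_T S T hT hw
      have h3 := (hT.1 w).2
      simp only [ChainSystem.Tmax, hnu, Option.elim]
      omega
  -- the two parts of perfEdges are disjoint
  have hdisj : Disjoint S.chainEdges
      (univ.filter fun p : V × V => T p.2 ≤ S.Tmax T p.1) := by
    rw [Finset.disjoint_left]
    intro p hp hp2
    simp only [ChainSystem.chainEdges, mem_filter, mem_univ, true_and] at hp hp2
    rw [ChainSystem.Tmax, hp] at hp2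
    simp only [Option.elim] at hp2
    have := (hT.1 p.2).1
    omega
  have hcard : (S.perfEdges T).card =
      S.chainEdges.card + (univ.filter fun p : V × V => T p.2 ≤ S.Tmax T p.1).card :=
    Finset.card_union_of_disjoint hdisj
  -- |chainEdges| = a
  have hce : S.chainEdges.card = a := by
    have h := ZF7.sum_chainEdges_eq S (fun _ => 1)
    simp only [Finset.sum_const, smul_eq_mul, mul_one] at h
    rw [h, ZF7.card_nonsources]
    omega
  -- counting the filtered pairs
  have hP : (univ.filter fun p : V × V => T p.2 ≤ S.Tmax T p.1).card
      = ∑ u : V, (M + (S.Tmax T u - 1)) := by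
    rw [Finset.card_filter, Fintype.sum_prod_type]
    refine Finset.sum_congr rfl fun u _ => ?_
    rw [← Finset.card_filter]
    exact ZF7.fiber_count S T hT (hTmax u).1 (hTmax u).2
  have hsum1 : ∑ u : V, (M + (S.Tmax T u - 1))
      = n * M + ∑ u : V, (S.Tmax T u - 1) := by
    rw [Finset.sum_add_distrib, Finset.sum_const, card_univ, smul_eq_mul]
  -- split over sinks / nonsinks
  have hns : (ZF7.nonsinks S).card = a := by
    have h := ZF7.sum_nonsinks_eq S (fun _ => 1)
    simp only [Finset.sum_const, smul_eq_mul, mul_one] at h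
    rw [h, hce]
  have hsinkcard : (univ.filter fun v => S.next v = none).card = M := by
    have h := Finset.card_filter_add_card_filter_not
      (s := (univ : Finset V)) (p := fun v => S.next v = none)
    rw [card_univ] at h
    have e : (univ.filter fun v => ¬ S.next v = none) = ZF7.nonsinks S := rfl
    rw [e, hns] at h
    omega
  have hsplit : ∑ u : V, (S.Tmax T u - 1)
      = M * (S.γ - 1) + ∑ u ∈ ZF7.nonsinks S, (S.Tmax T u - 1) := by
    rw [← Finset.sum_filter_add_sum_filter_not univ (fun v => S.next v = none)]
    congr 1
    · rw [Finset.sum_congr rfl (fun u hu => ?_), Finset.sum_const, hsinkcard, smul_eq_mul]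
      simp only [mem_filter, mem_univ, true_and] at hu
      simp [ChainSystem.Tmax, hu]
  have hnsum : ∑ u ∈ ZF7.nonsinks S, (S.Tmax T u - 1)
      = ∑ t ∈ Finset.Icc 2 S.γ, (t - 2) := by
    rw [ZF7.sum_nonsinks_eq S (fun u => S.Tmax T u - 1)]
    rw [← ZF7.image_T S T hT, Finset.sum_image (fun x hx y hy h =>
      ZF7.injOn_T S T hT (by exact_mod_cast hx) (by exact_mod_cast hy) h)]
    rw [← ZF7.sum_chainEdges_eq S (fun w => T w - 2)]
    refine Finset.sum_congr rfl fun p hp => ?_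
    simp only [ChainSystem.chainEdges, mem_filter, mem_univ, true_and] at hp
    simp [ChainSystem.Tmax, hp, Nat.sub_sub]
  set Sg : ℕ := ∑ t ∈ Finset.Icc 2 S.γ, (t - 2) with hSg
  -- Gauss sum
  have hgauss : 2 * Sg + a = a * a := by
    have h1 : Sg = ∑ j ∈ Finset.range a, j := by
      rw [hSg, hγ, ← Finset.Ico_add_one_right_eq_Icc, Finset.sum_Ico_eq_sum_range]
      simp
    have h2 := Finset.sum_range_id_mul_two a
    have h3 : a * (a - 1) + a = a * a := by
      rcases a with _ | b
      · simp
      · simp only [Nat.add_sub_cancel]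
        ring
    omega
  -- assemble
  have hkey : (S.perfEdges T).card = a + (n * M + (M * a + Sg)) := by
    rw [hcard, hce, hP, hsum1, hsplit, hnsum, hγ]
    simp only [Nat.add_sub_cancel]
  rw [hkey]
  -- final arithmetic
  rcases Nat.eq_zero_or_pos n with h0 | h0
  · have hM0 : M = 0 := by omega
    have ha0 : a = 0 := by omega
    have hS0 : Sg = 0 := by
      have : a * a = 0 := by simp [ha0]
      omega
    rw [h0, hM0, ha0, hS0]
  · obtain ⟨c, hc⟩ : ∃ c, M + 2 * a = c + 1 := ⟨M + 2 * a - 1, by omega⟩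
    have e : 2 * n - M - 1 = c := by omega
    rw [e, hna]
    have hg : 2 * (Sg : ℤ) + a = a * a := by exact_mod_cast hgauss
    have hc2 : (M : ℤ) + 2 * a = c + 1 := by exact_mod_cast hc
    have hZ : (2 * (a + ((M + a) * M + (M * a + Sg))) : ℤ) =
        (M + a) * ((M + a) + 1) + M * c := by
      linear_combination hg + (M : ℤ) * hc2
    exact_mod_cast hZ
end

section
/- Let 𝒞 = {C_1,…,C_m} be a set of m node-disjoint chains whose vertex sets partition a set V with |V| = n, let T be a time function for 𝒞, and let G be a (𝒞,T)-constructed graph. Then G equals the perfect (𝒞,T)-constructed graph 𝒢_perf^{𝒞,T} if and only if |E(G)| = n(n+1)/2 + m(2n − m − 1)/2. -/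
set_option linter.unusedSectionVars false
set_option maxHeartbeats 1000000

namespace ChainSystem
open Finset

variable {V : Type*} [Fintype V] [DecidableEq V] (S : ChainSystem V)

lemma mem_sources_iff (v : V) : v ∈ S.sources ↔ S.IsSource v := by
  simp [sources, IsSource]

lemma m_le_card : S.m ≤ Fintype.card V := Finset.card_le_univ _

def nonsinks : Finset V := Finset.univ.filter fun v => (S.next v).isSome

def succ (v : V) : V := (S.next v).getD v

lemma next_eq_succ {v : V} (hv : v ∈ S.nonsinks) : S.next v = some (S.succ v) := by
  simp only [nonsinks, mem_filter] at hv
  obtain ⟨w, hw⟩ := Option.isSome_iff_exists.mp hv.2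
  simp [succ, hw]

lemma image_succ : S.nonsinks.image S.succ = S.sourcesᶜ := by
  ext w
  simp only [mem_image, Finset.mem_compl, mem_sources_iff, IsSource, not_forall, not_not]
  constructor
  · rintro ⟨u, hu, rfl⟩
    exact ⟨u, S.next_eq_succ hu⟩
  · rintro ⟨u, hu⟩
    refine ⟨u, ?_, ?_⟩
    · simp [nonsinks, Option.isSome_iff_exists, hu]
    · have := S.next_eq_succ (v := u) (by simp [nonsinks, Option.isSome_iff_exists, hu])
      rw [hu] at this; exact (Option.some_inj.mp this).symm

lemma succ_injOn : Set.InjOn S.succ S.nonsinks := by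
  intro a ha b hb h
  have h1 := S.next_eq_succ ha
  have h2 := S.next_eq_succ hb
  exact S.inj a b (S.succ a) h1 (h ▸ h2)

lemma card_nonsinks : S.nonsinks.card = Fintype.card V - S.m := by
  have h1 : (S.nonsinks.image S.succ).card = S.nonsinks.card :=
    Finset.card_image_of_injOn S.succ_injOn
  rw [S.image_succ] at h1
  rw [← h1, Finset.card_compl]
  rfl

variable (T : V → ℕ)

lemma two_le_T (hT : S.IsTimeFunction T) {v : V} (hv : ¬ S.IsSource v) : 2 ≤ T v := by
  simp only [IsSource, not_forall, not_not] at hv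
  obtain ⟨u, hu⟩ := hv
  have h1 := hT.2.2.2 u v hu
  have h2 := (hT.1 u).1
  omega

lemma T_injOn (hT : S.IsTimeFunction T) : Set.InjOn T (↑(S.sourcesᶜ)) := by
  intro a ha b hb h
  simp only [coe_compl, Set.mem_compl_iff, mem_coe, mem_sources_iff] at ha hb
  by_contra hne
  exact hT.2.2.1 a b ha hb hne h

lemma image_T (hT : S.IsTimeFunction T) : S.sourcesᶜ.image T = Finset.Icc 2 S.γ := by
  have hsub : S.sourcesᶜ.image T ⊆ Finset.Icc 2 S.γ := by
    intro k hk
    simp only [mem_image, Finset.mem_compl, mem_sources_iff] at hk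
    obtain ⟨v, hv, rfl⟩ := hk
    exact Finset.mem_Icc.mpr ⟨S.two_le_T T hT hv, (hT.1 v).2⟩
  apply Finset.eq_of_subset_of_card_le hsub
  rw [Finset.card_image_of_injOn (S.T_injOn T hT), Finset.card_compl]
  have := S.m_le_card
  rw [Nat.card_Icc]
  simp only [γ, m] at *
  omega

lemma countLe (hT : S.IsTimeFunction T) {k : ℕ} (h1 : 1 ≤ k) (h2 : k ≤ S.γ) :
    (Finset.univ.filter fun v => T v ≤ k).card = S.m + (k - 1) := by
  have hsplit : (Finset.univ.filter fun v => T v ≤ k) =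
      S.sources ∪ S.sourcesᶜ.filter (fun v => T v ≤ k) := by
    ext v
    simp only [mem_filter, mem_union, Finset.mem_compl, mem_univ, true_and]
    by_cases hv : v ∈ S.sources
    · have : T v = 1 := hT.2.1 v ((S.mem_sources_iff v).mp hv)
      simp [hv, this, h1]
    · simp [hv]
  rw [hsplit, Finset.card_union_of_disjoint]
  · congr 1
    have hinj : Set.InjOn T (↑(S.sourcesᶜ.filter (fun v => T v ≤ k))) :=
      (S.T_injOn T hT).mono (by
        simp only [coe_compl]
        intro x hx
        simp only [coe_filter, Set.mem_setOf_eq, Finset.mem_compl] at hx ⊢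
        exact hx.1)
    have himg : (S.sourcesᶜ.filter (fun v => T v ≤ k)).image T = Finset.Icc 2 k := by
      ext x
      simp only [mem_image, mem_filter, Finset.mem_Icc]
      constructor
      · rintro ⟨v, ⟨hv, hvk⟩, rfl⟩
        exact ⟨S.two_le_T T hT (by simpa [mem_sources_iff] using hv), hvk⟩
      · rintro ⟨hx2, hxk⟩
        have : x ∈ S.sourcesᶜ.image T := by
          rw [S.image_T T hT]; exact Finset.mem_Icc.mpr ⟨hx2, le_trans hxk h2⟩
        obtain ⟨v, hv, rfl⟩ := Finset.mem_image.mp this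
        exact ⟨v, ⟨hv, hxk⟩, rfl⟩
    have := Finset.card_image_of_injOn hinj
    rw [himg, Nat.card_Icc] at this
    omega
  · rw [Finset.disjoint_left]
    intro a ha hb
    simp only [mem_filter, Finset.mem_compl] at hb
    exact hb.1 ha

lemma chainEdges_eq : S.chainEdges = S.nonsinks.image (fun u => (u, S.succ u)) := by
  ext ⟨a, b⟩
  simp only [chainEdges, mem_filter, mem_univ, true_and, mem_image]
  constructor
  · intro h
    have h1 : a ∈ S.nonsinks := by
      simp only [nonsinks, mem_filter, mem_univ, true_and, Option.isSome_iff_exists]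
      exact ⟨b, h⟩
    have h2 := S.next_eq_succ h1
    rw [h] at h2
    exact ⟨a, h1, by rw [Option.some_inj.mp h2]⟩
  · rintro ⟨u, hu, h⟩
    obtain ⟨rfl, rfl⟩ := Prod.mk_inj.mp h
    exact S.next_eq_succ hu

lemma card_chainEdges : S.chainEdges.card = Fintype.card V - S.m := by
  rw [chainEdges_eq, Finset.card_image_of_injOn (fun a _ b _ h => (Prod.ext_iff.mp h).1),
    S.card_nonsinks]

lemma card_fiber (u : V) :
    (((Finset.univ : Finset (V × V)).filter fun p => T p.2 ≤ S.Tmax T p.1).filter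
      fun p => p.1 = u).card = (Finset.univ.filter fun v => T v ≤ S.Tmax T u).card := by
  rw [show (((Finset.univ : Finset (V × V)).filter fun p => T p.2 ≤ S.Tmax T p.1).filter
      fun p => p.1 = u) = (Finset.univ.filter fun v => T v ≤ S.Tmax T u).image
      (fun v => (u, v)) from ?_]
  · exact Finset.card_image_of_injective _ (fun a b h => (Prod.ext_iff.mp h).2)
  · ext p
    simp only [mem_filter, mem_univ, true_and, mem_image]
    constructor
    · rintro ⟨h1, rfl⟩
      exact ⟨p.2, h1, rfl⟩
    · rintro ⟨v, hv, rfl⟩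
      exact ⟨hv, rfl⟩

lemma card_P :
    ((Finset.univ : Finset (V × V)).filter fun p => T p.2 ≤ S.Tmax T p.1).card =
      ∑ u, (Finset.univ.filter fun v => T v ≤ S.Tmax T u).card := by
  rw [Finset.card_eq_sum_card_fiberwise (f := Prod.fst) (t := Finset.univ)
    (fun x _ => mem_univ _)]
  exact Finset.sum_congr rfl fun u _ => S.card_fiber T u

lemma cnt_sink (hT : S.IsTimeFunction T) {u : V} (hu : S.next u = none) :
    (Finset.univ.filter fun v => T v ≤ S.Tmax T u).card = Fintype.card V := by
  have hγ : S.Tmax T u = S.γ := by simp [Tmax, hu]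
  rw [hγ, S.countLe T hT (by simp [γ]) le_rfl]
  have := S.m_le_card
  simp only [γ, m] at *
  omega

lemma cnt_nonsink (hT : S.IsTimeFunction T) {u : V} (hu : u ∈ S.nonsinks) :
    (Finset.univ.filter fun v => T v ≤ S.Tmax T u).card = S.m + (T (S.succ u) - 2) := by
  have hn := S.next_eq_succ hu
  have hTm : S.Tmax T u = T (S.succ u) - 1 := by simp [Tmax, hn]
  have h2 : 2 ≤ T (S.succ u) := S.two_le_T T hT (by
    simp only [IsSource, not_forall, not_not]; exact ⟨u, hn⟩)
  have hle : T (S.succ u) ≤ S.γ := (hT.1 _).2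
  rw [hTm, S.countLe T hT (by omega) (by omega)]
  omega

end ChainSystem


namespace ChainSystem
open Finset
variable {V : Type*} [Fintype V] [DecidableEq V] (S : ChainSystem V) (T : V → ℕ)

lemma two_mul_card_perf (hT : S.IsTimeFunction T) :
    2 * (S.perfEdges T).card = Fintype.card V * (Fintype.card V + 1) +
      S.m * (2 * Fintype.card V - S.m - 1) := by
  set n := Fintype.card V with hn
  have hm : S.m ≤ n := S.m_le_card
  obtain ⟨d, hd⟩ : ∃ d, n = S.m + d := ⟨n - S.m, by omega⟩
  have hγ : S.γ = d + 1 := by simp only [γ]; omega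
  have hnd : S.nonsinks.card = d := by rw [S.card_nonsinks]; omega
  -- disjointness of chain edges and the perfect part
  have hdisj : Disjoint S.chainEdges
      ((Finset.univ : Finset (V × V)).filter fun p => T p.2 ≤ S.Tmax T p.1) := by
    rw [Finset.disjoint_left]
    intro p hp hp2
    simp only [chainEdges, mem_filter, mem_univ, true_and] at hp hp2
    have hTm : S.Tmax T p.1 = T p.2 - 1 := by simp [Tmax, hp]
    have h1 := (hT.1 p.2).1
    omega
  have hcard : (S.perfEdges T).card = S.chainEdges.card +
      ((Finset.univ : Finset (V × V)).filter fun p => T p.2 ≤ S.Tmax T p.1).card := by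
    rw [perfEdges, Finset.card_union_of_disjoint hdisj]
  -- successors are ≥ 2
  have hB2 : ∀ u ∈ S.nonsinks, 2 ≤ T (S.succ u) := fun u hu => S.two_le_T T hT (by
    simp only [IsSource, not_forall, not_not]; exact ⟨u, S.next_eq_succ hu⟩)
  -- sum of T over successors
  have hA : ∑ u ∈ S.nonsinks, T (S.succ u) = ∑ x ∈ Finset.Icc 2 S.γ, x := by
    rw [← S.image_T T hT, ← S.image_succ]
    rw [Finset.sum_image (fun a ha b hb h => by
      rw [S.image_succ] at ha hb
      exact (S.T_injOn T hT) (by exact_mod_cast ha) (by exact_mod_cast hb) h)]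
    rw [Finset.sum_image (fun a ha b hb h => S.succ_injOn ha hb h)]
  -- Gauss sum
  have hG : (∑ x ∈ Finset.Icc 2 S.γ, x) * 2 + 2 = (d + 2) * (d + 1) := by
    have hIcc : Finset.Icc 2 S.γ = Finset.Ico 2 (d + 2) := by
      rw [hγ, ← Finset.Ico_add_one_right_eq_Icc]; rfl
    have hsplit : (∑ i ∈ Finset.Ico 0 2, i) + ∑ i ∈ Finset.Ico 2 (d + 2), i
        = ∑ i ∈ Finset.Ico 0 (d + 2), i :=
      Finset.sum_Ico_consecutive _ (by omega) (by omega)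
    have h0 : (∑ i ∈ Finset.Ico 0 2, i) = 1 := by decide
    have hR : (∑ i ∈ Finset.Ico 0 (d + 2), i) * 2 = (d + 2) * (d + 1) := by
      rw [← Finset.range_eq_Ico, Finset.sum_range_id_mul_two]
      congr 1
    rw [hIcc]
    rw [h0] at hsplit
    omega
  set B := ∑ u ∈ S.nonsinks, (T (S.succ u) - 2) with hB
  have hB' : 2 * B + 4 * d = d * d + 3 * d := by
    have h1 : ∑ u ∈ S.nonsinks, T (S.succ u)
        = ∑ u ∈ S.nonsinks, ((T (S.succ u) - 2) + 2) :=
      Finset.sum_congr rfl fun u hu => (Nat.sub_add_cancel (hB2 u hu)).symm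
    rw [hA] at h1
    rw [Finset.sum_add_distrib, Finset.sum_const, smul_eq_mul, hnd] at h1
    have h2 := hG
    rw [h1] at hG
    rw [hB]
    nlinarith [hG]
  -- the sum over all u of the counts
  have hsum : ∑ u, (Finset.univ.filter fun v => T v ≤ S.Tmax T u).card
      = S.m * n + (d * S.m + B) := by
    rw [← Finset.sum_compl_add_sum S.nonsinks]
    congr 1
    · have hval : ∀ u ∈ S.nonsinksᶜ, (Finset.univ.filter fun v => T v ≤ S.Tmax T u).card = n := by
        intro u hu
        refine S.cnt_sink T hT ?_
        simp only [nonsinks, Finset.mem_compl, mem_filter, mem_univ, true_and,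
          Option.isSome_iff_exists, not_exists] at hu
        cases h : S.next u with
        | none => rfl
        | some w => exact absurd h (hu w)
      rw [Finset.sum_congr rfl hval, Finset.sum_const, smul_eq_mul,
        Finset.card_compl, S.card_nonsinks]
      congr 1
      omega
    · have hval : ∀ u ∈ S.nonsinks, (Finset.univ.filter fun v => T v ≤ S.Tmax T u).card
          = S.m + (T (S.succ u) - 2) := fun u hu => S.cnt_nonsink T hT hu
      rw [Finset.sum_congr rfl hval, Finset.sum_add_distrib, Finset.sum_const,
        smul_eq_mul, hnd]
  have hperf : (S.perfEdges T).card = d + (S.m * n + (d * S.m + B)) := by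
    rw [hcard, S.card_P T, hsum, S.card_chainEdges]
    congr 2
    omega
  -- final arithmetic
  rcases Nat.eq_zero_or_pos S.m with h0 | hpos
  · rw [h0] at hperf hd ⊢
    simp only [zero_mul, mul_zero, zero_add, add_zero] at hperf ⊢
    rw [hperf]
    nlinarith [hB']
  · obtain ⟨e, he⟩ : ∃ e, S.m = e + 1 := ⟨S.m - 1, by omega⟩
    have hsub : 2 * n - S.m - 1 = e + 2 * d := by omega
    rw [hperf, hsub, hd, he]
    nlinarith [hB']

lemma constructed_subset_perf {E : Finset (V × V)} (hE : S.IsConstructed T E) :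
    E ⊆ S.perfEdges T := by
  intro p hp
  by_cases hc : p ∈ S.chainEdges
  · exact Finset.mem_union_left _ hc
  · exact Finset.mem_union_right _ (Finset.mem_filter.mpr ⟨Finset.mem_univ _, hE.2 p hp hc⟩)

end ChainSystem


/-- a `(𝒞,T)`-constructed graph `G` equals the perfect `(𝒞,T)`-constructed
graph iff `|E(G)| = n(n+1)/2 + m(2n − m − 1)/2` (stated doubled, to avoid division). -/
theorem stmt8 {V : Type*} [Fintype V] [DecidableEq V] (S : ChainSystem V) (T : V → ℕ)
    (hT : S.IsTimeFunction T) (E : Finset (V × V)) (hE : S.IsConstructed T E) :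
    E = S.perfEdges T ↔
      2 * E.card = Fintype.card V * (Fintype.card V + 1) +
        S.m * (2 * Fintype.card V - S.m - 1) := by 
  constructor
  · rintro rfl
    exact S.two_mul_card_perf T hT
  · intro h
    apply Finset.eq_of_subset_of_card_le (S.constructed_subset_perf T hE)
    have h2 := S.two_mul_card_perf T hT
    omega
end

section
/- Let G be a digraph on a finite vertex set V with |V| = n, and suppose G has a zero forcing set Z with |Z| = m. Then |E(G)| ≤ n(n+1)/2 + m(2n − m − 1)/2. -/
lemma zfreach_subset {V : Type*} [DecidableEq V] (E : Finset (V × V)) {B C : Finset V}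
    (h : ZFReach E B C) : B ⊆ C := by
  induction h with
  | refl B => exact subset_rfl
  | step h hr ih => exact (Finset.subset_insert _ _).trans ih

lemma zf_key {V : Type*} [DecidableEq V] (E : Finset (V × V)) {B C : Finset V}
    (h : ZFReach E B C) :
    ∃ (k : ℕ) (N : Finset (V × V)), C.card = B.card + k ∧ (∀ p ∈ N, p ∉ E) ∧
      (∀ p ∈ N, ∃ x, (p.1, x) ∈ E ∧ x ≠ p.1 ∧ x ∉ B) ∧
      k * k ≤ 2 * N.card + k := by
  induction h with
  | refl B => exact ⟨0, ∅, by simp, by simp, by simp, by simp⟩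
  | @step B C u v h hr ih =>
    obtain ⟨k, N, hcard, hNE, hNx, hNk⟩ := ih
    obtain ⟨huB, hvB, huv, huvE, hforce⟩ := h
    have hsub : insert v B ⊆ C := zfreach_subset E hr
    set M : Finset (V × V) := (C \ insert v B).image fun w => (u, w) with hM
    have hMmem : ∀ p ∈ M, ∃ w, w ∈ C \ insert v B ∧ p = (u, w) := by
      intro p hp
      simp only [hM, Finset.mem_image] at hp
      obtain ⟨w, hw, hwp⟩ := hp
      exact ⟨w, hw, hwp.symm⟩
    have hMcard : M.card = k := by
      have hinj : Function.Injective (fun w : V => (u, w)) := by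
        intro a b hab; simpa using hab
      have h1 : M.card = (C \ insert v B).card := Finset.card_image_of_injective _ hinj
      have h2 : (C \ insert v B).card = C.card - (insert v B).card :=
        Finset.card_sdiff_of_subset hsub
      have h3 : (insert v B).card = B.card + 1 := Finset.card_insert_of_notMem hvB
      omega
    have hdisj : Disjoint M N := by
      rw [Finset.disjoint_left]
      intro p hp hpN
      obtain ⟨w, hw, rfl⟩ := hMmem p hp
      obtain ⟨x, hxE, hxu, hxB⟩ := hNx _ hpN
      simp only [Finset.mem_insert, not_or] at hxB
      exact hxB.1 (hforce x hxE hxu hxB.2)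
    refine ⟨k + 1, M ∪ N, ?_, ?_, ?_, ?_⟩
    · have h3 : (insert v B).card = B.card + 1 := Finset.card_insert_of_notMem hvB
      omega
    · intro p hp
      rcases Finset.mem_union.1 hp with hp | hp
      · obtain ⟨w, hw, rfl⟩ := hMmem p hp
        simp only [Finset.mem_sdiff, Finset.mem_insert, not_or] at hw
        intro hE
        have hwu : w ≠ u := fun h => hw.2.2 (h ▸ huB)
        exact hw.2.1 (hforce w hE hwu hw.2.2)
      · exact hNE p hp
    · intro p hp
      rcases Finset.mem_union.1 hp with hp | hp
      · obtain ⟨w, hw, rfl⟩ := hMmem p hp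
        exact ⟨v, huvE, Ne.symm huv, hvB⟩
      · obtain ⟨x, hxE, hxu, hxB⟩ := hNx p hp
        simp only [Finset.mem_insert, not_or] at hxB
        exact ⟨x, hxE, hxu, hxB.2⟩
    · have hc : (M ∪ N).card = M.card + N.card := Finset.card_union_of_disjoint hdisj
      rw [hc, hMcard]
      nlinarith

/-- a digraph on `n` vertices admitting a zero forcing set of size `m` has at
most `n(n+1)/2 + m(2n − m − 1)/2` edges (stated doubled, to avoid division). -/
theorem stmt9 {V : Type*} [Fintype V] [DecidableEq V] (E : Finset (V × V)) (Z : Finset V)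
    (hZ : IsZFS E Z) :
    2 * E.card ≤ Fintype.card V * (Fintype.card V + 1) +
      Z.card * (2 * Fintype.card V - Z.card - 1) := by
  obtain ⟨k, N, hcard, hNE, _, hNk⟩ := zf_key E hZ
  have hn : Fintype.card V = Z.card + k := by
    simpa [Finset.card_univ] using hcard
  have hdisj : Disjoint E N := by
    rw [Finset.disjoint_right]; exact hNE
  have htot : E.card + N.card ≤ Fintype.card V * Fintype.card V := by
    have h1 : (E ∪ N).card = E.card + N.card := Finset.card_union_of_disjoint hdisj
    have h2 : (E ∪ N).card ≤ Fintype.card (V × V) := Finset.card_le_univ _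
    rw [Fintype.card_prod] at h2
    omega
  rw [hn] at htot ⊢
  set m := Z.card with hm
  rcases Nat.eq_zero_or_pos (m + 2 * k) with h0 | h0
  · have hm0 : m = 0 := by omega
    have hk0 : k = 0 := by omega
    simp only [hm0, hk0] at htot ⊢
    omega
  · have hsub : 2 * (m + k) - m - 1 = m + 2 * k - 1 := by omega
    rw [hsub]
    obtain ⟨j, hj⟩ : ∃ j, m + 2 * k = j + 1 := ⟨m + 2 * k - 1, by omega⟩
    have hj' : m + 2 * k - 1 = j := by omega
    rw [hj']
    nlinarith
end

section
/- Let 𝒞 = {C_1,…,C_m} be a set of m node-disjoint chains whose vertex sets partition a set V with |V| = n and with set of sources V_C, let T be a time function for 𝒞, and let G be a (𝒞,T)-constructed graph. Then: (i) for every subset E′ ⊆ E(G) \ (⋃_{i=1}^m E(C_i)), the set V_C is a zero forcing set of G − E′; (ii) every subtractive edge-set E* ⊆ E(G) of G with respect to V_C satisfies |E*| ≤ |E(G)| − n + m; in particular E(G) \ (⋃_{i=1}^m E(C_i)) is a subtractive edge-set of maximum cardinality, and the critical subtractive number of G equals |E(G)| − n + m. -/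
lemma zfreach_card_le {V : Type*} [DecidableEq V] {F : Finset (V × V)} {B C : Finset V}
    (h : ZFReach F B C) : C.card ≤ B.card + (F.filter fun p => p.2 ∉ B).card := by
  induction h with
  | refl B => simp
  | @step B C u v hf hr ih =>
    obtain ⟨hu, hv, hne, hEuv, hforce⟩ := hf
    have hsub : insert (u, v) (F.filter fun p => p.2 ∉ insert v B) ⊆
        F.filter fun p => p.2 ∉ B := by
      intro p hp
      rcases Finset.mem_insert.mp hp with rfl | hp
      · exact Finset.mem_filter.mpr ⟨hEuv, hv⟩
      · rw [Finset.mem_filter] at hp ⊢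
        exact ⟨hp.1, fun hb => hp.2 (Finset.mem_insert_of_mem hb)⟩
    have hnm : (u, v) ∉ (F.filter fun p => p.2 ∉ insert v B) := by simp
    have h1 := Finset.card_le_card hsub
    rw [Finset.card_insert_of_notMem hnm] at h1
    have h2 : (insert v B).card = B.card + 1 := Finset.card_insert_of_notMem hv
    omega

lemma chainEdges_card {V : Type*} [Fintype V] [DecidableEq V] (S : ChainSystem V) :
    S.chainEdges.card + S.m = Fintype.card V := by
  classical
  have hinj : Set.InjOn Prod.snd (S.chainEdges : Set (V × V)) := by
    intro p hp q hq h
    have hp' : S.next p.1 = some p.2 := (Finset.mem_filter.mp (Finset.mem_coe.mp hp)).2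
    have hq' : S.next q.1 = some q.2 := (Finset.mem_filter.mp (Finset.mem_coe.mp hq)).2
    have h1 : S.next q.1 = some p.2 := by rw [hq', h]
    exact Prod.ext (S.inj p.1 q.1 p.2 hp' h1) h
  have himg : S.chainEdges.image Prod.snd =
      Finset.univ.filter fun v => ¬ ∀ u, S.next u ≠ some v := by
    ext v
    constructor
    · intro hv
      obtain ⟨p, hp, rfl⟩ := Finset.mem_image.mp hv
      have hp' : S.next p.1 = some p.2 := (Finset.mem_filter.mp hp).2
      simp only [Finset.mem_filter, Finset.mem_univ, true_and, not_forall, not_not]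
      exact ⟨p.1, hp'⟩
    · intro hv
      simp only [Finset.mem_filter, Finset.mem_univ, true_and, not_forall, not_not] at hv
      obtain ⟨u, hu⟩ := hv
      exact Finset.mem_image.mpr ⟨(u, v), Finset.mem_filter.mpr ⟨Finset.mem_univ _, hu⟩, rfl⟩
  have hc1 : S.chainEdges.card =
      (Finset.univ.filter fun v => ¬ ∀ u, S.next u ≠ some v).card := by
    rw [← himg, Finset.card_image_of_injOn hinj]
  have hc2 := Finset.card_filter_add_card_filter_not
      (s := (Finset.univ : Finset V)) (p := fun v => ∀ u, S.next u ≠ some v)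
  rw [Finset.card_univ] at hc2
  have hm : S.m = (Finset.univ.filter fun v => ∀ u, S.next u ≠ some v).card := rfl
  omega

lemma constructed_zfs_s11 {V : Type*} [Fintype V] [DecidableEq V] (S : ChainSystem V)
    (T : V → ℕ) (hT : S.IsTimeFunction T) (F : Finset (V × V))
    (hCE : S.chainEdges ⊆ F) (hF : ∀ p ∈ F, p ∉ S.chainEdges → T p.2 ≤ S.Tmax T p.1) :
    IsZFS F S.sources := by
  classical
  obtain ⟨hrange, hsrc, hinj, hincr⟩ := hT
  have key : ∀ k t, 1 ≤ t → S.γ ≤ t + k →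
      ZFReach F (Finset.univ.filter fun v => T v ≤ t) Finset.univ := by
    intro k
    induction k with
    | zero =>
      intro t ht hg
      have h : (Finset.univ.filter fun v => T v ≤ t) = Finset.univ := by
        ext v
        simp only [Finset.mem_filter, Finset.mem_univ, true_and, iff_true]
        exact le_trans (hrange v).2 (by omega)
      rw [h]; exact ZFReach.refl _
    | succ k ih =>
      intro t ht hg
      by_cases hgt : S.γ ≤ t
      · have h : (Finset.univ.filter fun v => T v ≤ t) = Finset.univ := by
          ext v
          simp only [Finset.mem_filter, Finset.mem_univ, true_and, iff_true]
          exact le_trans (hrange v).2 hgt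
        rw [h]; exact ZFReach.refl _
      by_cases hex : ∃ v, T v = t + 1
      · obtain ⟨v, hv⟩ := hex
        have hvns : ¬ S.IsSource v := fun hs => by have := hsrc v hs; omega
        obtain ⟨u, hu⟩ : ∃ u, S.next u = some v := by
          unfold ChainSystem.IsSource at hvns
          push_neg at hvns
          exact hvns
        have hTu : T u < T v := hincr u v hu
        have hforce : Forces F (Finset.univ.filter fun w => T w ≤ t) u v := by
          refine ⟨?_, ?_, ?_, ?_, ?_⟩
          · simp only [Finset.mem_filter, Finset.mem_univ, true_and]; omega
          · simp only [Finset.mem_filter, Finset.mem_univ, true_and]; omega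
          · intro h; rw [h] at hTu; omega
          · exact hCE (by simp [ChainSystem.chainEdges, hu])
          · intro w hw hwu hwB
            simp only [Finset.mem_filter, Finset.mem_univ, true_and, not_le] at hwB
            by_cases hch : (u, w) ∈ S.chainEdges
            · simp only [ChainSystem.chainEdges, Finset.mem_filter, Finset.mem_univ,
                true_and] at hch
              rw [hu] at hch
              exact (Option.some_inj.mp hch).symm
            · have h1 : T w ≤ S.Tmax T u := hF (u, w) hw hch
              have hTmax : S.Tmax T u = T v - 1 := by
                simp [ChainSystem.Tmax, hu]
              rw [hTmax] at h1
              omega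
        have hins : insert v (Finset.univ.filter fun w => T w ≤ t) =
            Finset.univ.filter fun w => T w ≤ t + 1 := by
          ext w
          simp only [Finset.mem_insert, Finset.mem_filter, Finset.mem_univ, true_and]
          constructor
          · rintro (rfl | h) <;> omega
          · intro h
            by_cases hw : T w ≤ t
            · right; exact hw
            · left
              have hwns : ¬ S.IsSource w := fun hs => by have := hsrc w hs; omega
              by_contra hne
              exact hinj w v hwns hvns hne (by omega)
        exact ZFReach.step hforce (hins ▸ ih (t + 1) (by omega) (by omega))
      · push_neg at hex
        have h : (Finset.univ.filter fun v => T v ≤ t) =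
            Finset.univ.filter fun v => T v ≤ t + 1 := by
          ext v
          simp only [Finset.mem_filter, Finset.mem_univ, true_and]
          have := hex v
          omega
        rw [h]
        exact ih (t + 1) (by omega) (by omega)
  have hstart : S.sources = Finset.univ.filter fun v => T v ≤ 1 := by
    ext v
    simp only [ChainSystem.sources, Finset.mem_filter, Finset.mem_univ, true_and]
    constructor
    · intro h
      have := hsrc v h
      omega
    · intro h u hu
      have h1 := hincr u v hu
      have h2 := (hrange u).1
      omega
  have hγ : 1 ≤ S.γ := Nat.le_add_left 1 _
  unfold IsZFS
  rw [hstart]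
  exact key (S.γ - 1) 1 le_rfl (by omega)

/-- for a `(𝒞,T)`-constructed graph `G` with control nodes the sources of
`𝒞`: (i) removing any subset of `E(G) \ ⋃ᵢ E(Cᵢ)` preserves the zero forcing property;
(ii) every subtractive edge-set has cardinality at most `|E(G)| − n + m`
(stated as `|E*| + n ≤ |E(G)| + m`, to avoid truncated subtraction); hence
`E(G) \ ⋃ᵢ E(Cᵢ)` is a critical subtractive edge-set and the critical subtractive number
equals `|E(G)| − n + m`. -/
theorem stmt11 {V : Type*} [Fintype V] [DecidableEq V] (S : ChainSystem V) (T : V → ℕ)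
    (hT : S.IsTimeFunction T) (E : Finset (V × V)) (hE : S.IsConstructed T E) :
    (∀ E' ⊆ E \ S.chainEdges, IsZFS (E \ E') S.sources) ∧
    (∀ Estar ⊆ E, (∀ E' ⊆ Estar, IsZFS (E \ E') S.sources) →
      Estar.card + Fintype.card V ≤ E.card + S.m) ∧
    (E \ S.chainEdges).card + Fintype.card V = E.card + S.m := by
  obtain ⟨hCE, hcon⟩ := hE
  have hcc := chainEdges_card S
  have hi : ∀ E' ⊆ E \ S.chainEdges, IsZFS (E \ E') S.sources := by
    intro E' hE'
    apply constructed_zfs_s11 S T hT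
    · intro p hp
      refine Finset.mem_sdiff.mpr ⟨hCE hp, fun h => ?_⟩
      exact (Finset.mem_sdiff.mp (hE' h)).2 hp
    · intro p hp hnp
      exact hcon p (Finset.mem_sdiff.mp hp).1 hnp
  refine ⟨hi, ?_, ?_⟩
  · intro Estar hsubE hsub
    have hz := hsub Estar (Finset.Subset.refl _)
    have hb := zfreach_card_le hz
    have h1 : (((E \ Estar)).filter fun p => p.2 ∉ S.sources).card ≤ (E \ Estar).card :=
      Finset.card_le_card (Finset.filter_subset _ _)
    have h3 : Estar.card ≤ E.card := Finset.card_le_card hsubE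
    have h2 : (E \ Estar).card = E.card - Estar.card := Finset.card_sdiff_of_subset hsubE
    have h4 : (Finset.univ : Finset V).card = Fintype.card V := Finset.card_univ
    have hm : S.m = S.sources.card := rfl
    omega
  · have h3 : S.chainEdges.card ≤ E.card := Finset.card_le_card hCE
    have h2 : (E \ S.chainEdges).card = E.card - S.chainEdges.card :=
      Finset.card_sdiff_of_subset hCE
    omega
end

section
/- Let G be a digraph on a finite vertex set V, let Z be a zero forcing set of G, and let u, v ∈ V with u ≠ v and (u,v) ∉ E(G). If Z is not a zero forcing set of G + {(u,v)}, then Z is a zero forcing set of G + {(v,u)}. -/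
lemma zfreach_insert_of_mem {V : Type*} [DecidableEq V] (E : Finset (V × V)) {a b : V}
    {B C : Finset V} (hr : ZFReach E B C) (hb : b ∈ B) :
    ZFReach (insert (a, b) E) B C := by
  induction hr with
  | refl B => exact ZFReach.refl B
  | @step B C x w h hr ih =>
    refine ZFReach.step ⟨h.1, h.2.1, h.2.2.1, Finset.mem_insert_of_mem h.2.2.2.1,
      fun w' hw' hne' hnB => ?_⟩ (ih (Finset.mem_insert_of_mem hb))
    rcases Finset.mem_insert.1 hw' with heq | hmem
    · have hb' : w' = b := (Prod.ext_iff.1 heq).2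
      exact absurd hb (hb' ▸ hnB)
    · exact h.2.2.2.2 w' hmem hne' hnB

lemma zfreach_cases {V : Type*} [Fintype V] [DecidableEq V] (E : Finset (V × V))
    {u v : V} (hne : u ≠ v) (huv : (u, v) ∉ E) :
    ∀ {B C : Finset V}, ZFReach E B C → v ∉ B →
      ZFReach (insert (u, v) E) B C ∨ ZFReach (insert (v, u) E) B C := by
  intro B C hr
  induction hr with
  | refl B => intro _; exact Or.inl (ZFReach.refl B)
  | @step B C x w h hr ih =>
    intro hv
    by_cases hwv : w = v
    · subst hwv
      left
      refine ZFReach.step ⟨h.1, h.2.1, h.2.2.1, Finset.mem_insert_of_mem h.2.2.2.1,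
        fun w' hw' hne' hnB => ?_⟩
        (zfreach_insert_of_mem E hr (Finset.mem_insert_self _ _))
      rcases Finset.mem_insert.1 hw' with heq | hmem
      · exact (Prod.ext_iff.1 heq).2
      · exact h.2.2.2.2 w' hmem hne' hnB
    · have hv' : v ∉ insert w B := by
        simp only [Finset.mem_insert]; rintro (rfl | hvB); exact hwv rfl; exact hv hvB
      rcases ih hv' with hl | hrgt
      · by_cases hxu : x = u
        · subst hxu
          right
          refine ZFReach.step ⟨h.1, h.2.1, h.2.2.1,
            Finset.mem_insert_of_mem h.2.2.2.1, fun w' hw' hne' hnB => ?_⟩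
            (zfreach_insert_of_mem E hr (Finset.mem_insert_of_mem h.1))
          rcases Finset.mem_insert.1 hw' with heq | hmem
          · exact absurd (Prod.ext_iff.1 heq).2 hne'
          · exact h.2.2.2.2 w' hmem hne' hnB
        · left
          refine ZFReach.step ⟨h.1, h.2.1, h.2.2.1,
            Finset.mem_insert_of_mem h.2.2.2.1, fun w' hw' hne' hnB => ?_⟩ hl
          rcases Finset.mem_insert.1 hw' with heq | hmem
          · have hb' : x = u := (Prod.ext_iff.1 heq).1
            exact absurd hb' hxu
          · exact h.2.2.2.2 w' hmem hne' hnB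
      · right
        have hxv : x ≠ v := fun hx => hv (hx ▸ h.1)
        refine ZFReach.step ⟨h.1, h.2.1, h.2.2.1,
          Finset.mem_insert_of_mem h.2.2.2.1, fun w' hw' hne' hnB => ?_⟩ hrgt
        rcases Finset.mem_insert.1 hw' with heq | hmem
        · have hb' : x = v := (Prod.ext_iff.1 heq).1
          exact absurd hb' hxv
        · exact h.2.2.2.2 w' hmem hne' hnB

/-- if `Z` is a zero forcing set of `G`, `u ≠ v`, `(u,v) ∉ E(G)`, and `Z`
fails to be a zero forcing set of `G + {(u,v)}`, then `Z` is a zero forcing set of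
`G + {(v,u)}`. -/
theorem stmt15 {V : Type*} [Fintype V] [DecidableEq V] (E : Finset (V × V)) (Z : Finset V)
    (hZ : IsZFS E Z) (u v : V) (hne : u ≠ v) (huv : (u, v) ∉ E)
    (h : ¬ IsZFS (insert (u, v) E) Z) :
    IsZFS (insert (v, u) E) Z := by
  by_cases hvZ : v ∈ Z
  · exact absurd (zfreach_insert_of_mem E hZ hvZ) h
  · rcases zfreach_cases E hne huv hZ hvZ with hl | hrr
    · exact absurd hl h
    · exact hrr
end
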